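/- arXiv:1512.01909 — 2 statements merged into one kernel-verified Lean document; each statement's English description precedes it below -/
import Mathlib

section
/- Let (ξ_t)_{t∈[0,1]} be a family of real-valued random variables on a probability space (Ω, 𝓕, P), let α > 1, β > 0 be constants, and let G : [0,1] → ℝ be a continuous increasing function. Assume that for all 0 ≤ r ≤ s ≤ t ≤ 1 and all u > 0 one has P(δ[ξ](r,s,t) > u) ≤ (G(t) − G(r))^α · u^{−2β}. Then there exists a finite constant K = K(α, β), depending only on α and β, such that for all u > 0: P(Δ[ξ] > u) ≤ K · u^{−2β} · (G(1) − G(0))^α. -/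
/-!
The grid points `i / m!` exhaust the rationals of `[0, 1]` and the grids increase with `m`, so by
continuity from below it suffices to bound, uniformly in `N`, the probability that the sequence
`η j = ξ (j / N)` has some `min |η j - η i| |η k - η j| > v`, with weights `w j = G (j / N)`.

This goes by induction on the length of the index interval `[a, b]`: cut it at `h` so that `[a, h]`
and `[h + 1, b]` each carry at most half of the weight `L = w b - w a`. A fluctuation above `v` on
`[a, b]` is either one above `ρ v` inside a half, or forces one of boundedly many events of
probability `O(L^α v^{-2β})`: single triples, covered by the hypothesis, and, for triples straddling
the cut, large fluctuations with fixed endpoints on a half, which are bounded first by the same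
induction. Since `α > 1`, the halves contribute at most
`2 (L/2)^α (ρ v)^{-2β} = 2^{1-α} ρ^{-2β} L^α v^{-2β}`, so any `ρ < 1` with `2^{1-α} ρ^{-2β} < 1`
closes the recursion with a constant depending only on `α` and `β`.
-/

open MeasureTheory Set

/-- `δ[ξ](r,s,t)(ω) = min(|ξ_s - ξ_r|, |ξ_t - ξ_s|)`. -/
noncomputable def procDelta {Ω : Type*} (ξ : ℝ → Ω → ℝ) (r s t : ℝ) (ω : Ω) : ℝ :=
  min |ξ s ω - ξ r ω| |ξ t ω - ξ s ω|

/-- The event `{Δ[ξ] > u}`, where `Δ[ξ]` is the supremum of `δ[ξ](r,s,t)` over all rational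
triples `0 ≤ r ≤ s ≤ t ≤ 1`; the supremum exceeds `u` iff some triple does. -/
def DeltaGt {Ω : Type*} (ξ : ℝ → Ω → ℝ) (u : ℝ) : Set Ω :=
  {ω | ∃ r s t : ℚ, 0 ≤ (r : ℝ) ∧ (r : ℝ) ≤ (s : ℝ) ∧ (s : ℝ) ≤ (t : ℝ) ∧ (t : ℝ) ≤ 1 ∧
    u < procDelta ξ (r : ℝ) (s : ℝ) (t : ℝ) ω}

def minIncr {ι : Type*} (x : ι → ℝ) (i j k : ι) : ℝ :=
  min |x j - x i| |x k - x j|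

section MinIncr

variable {ι : Type*} (x : ι → ℝ)

lemma minIncr_comm (i j k : ι) : minIncr x k j i = minIncr x i j k := by
  rw [minIncr, minIncr, abs_sub_comm (x j) (x k), abs_sub_comm (x i) (x j), min_comm]

lemma minIncr_le_add_left (i j h k : ι) :
    minIncr x i j k ≤ minIncr x i j h + minIncr x i h k := by
  have hji : |x j - x i| ≤ |x h - x j| + |x h - x i| := by
    simpa only [abs_sub_comm (x j) (x h)] using abs_sub_le (x j) (x h) (x i)
  have hkj : |x k - x j| ≤ |x h - x j| + |x k - x h| := by
    simpa only [add_comm, abs_sub_comm (x h) (x j)] using abs_sub_le (x k) (x h) (x j)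
  simp only [minIncr]
  grind

lemma minIncr_le_add_right (i j h k : ι) :
    minIncr x i j k ≤ minIncr x h j k + minIncr x i h k := by
  simpa only [minIncr_comm] using minIncr_le_add_left x k j h i

/-- The crossing case, for `p`, `q` the two sides of a cut of `[a, b]` and `i ≤ p < q ≤ k`. -/
lemma minIncr_le_two_mul {a i p q k b : ι} {θ : ℝ}
    (hip : minIncr x a i p ≤ θ) (hkq : minIncr x q k b ≤ θ)
    (hpq : minIncr x a p q ≤ θ) (hpb : minIncr x a p b ≤ θ) :
    minIncr x i p k ≤ 2 * θ := by
  simp only [minIncr] at *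
  have := abs_sub_le (x p) (x a) (x i)
  have := abs_sub_le (x k) (x q) (x p)
  have := abs_sub_le (x k) (x b) (x p)
  have := abs_sub_comm (x a) (x i)
  have := abs_sub_comm (x k) (x b)
  grind

end MinIncr

/-- The solution `K` of `K = 2 ^ (1 - α) * ρ ^ (-2β) * K + c`, the recursion produced by halving
the weight. -/
noncomputable def halvingConst (α β ρ c : ℝ) : ℝ :=
  c / (1 - 2 ^ (1 - α) * ρ ^ (-(2 * β)))

lemma halvingConst_pos {α β ρ c : ℝ} (hρ : 2 ^ (1 - α) * ρ ^ (-(2 * β)) < 1) (hc : 0 < c) :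
    0 < halvingConst α β ρ c :=
  div_pos hc (sub_pos.2 hρ)

/-- Chosen so that `2 ^ (1 - α) * ρ ^ (-2β) = 2 ^ ((1 - α) / 2) < 1`. -/
noncomputable def halvingRatio (α β : ℝ) : ℝ :=
  2 ^ ((1 - α) / (4 * β))

lemma halvingRatio_pos (α β : ℝ) : 0 < halvingRatio α β :=
  Real.rpow_pos_of_pos two_pos _

lemma halvingRatio_lt_one {α β : ℝ} (hα : 1 < α) (hβ : 0 < β) : halvingRatio α β < 1 :=
  Real.rpow_lt_one_of_one_lt_of_neg one_lt_two (div_neg_of_neg_of_pos (by linarith) (by linarith))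

lemma two_rpow_mul_halvingRatio_rpow_lt_one {α β : ℝ} (hα : 1 < α) (hβ : 0 < β) :
    2 ^ (1 - α) * halvingRatio α β ^ (-(2 * β)) < 1 := by
  rw [halvingRatio, ← Real.rpow_mul zero_le_two, ← Real.rpow_add two_pos]
  refine Real.rpow_lt_one_of_one_lt_of_neg one_lt_two ?_
  have : (1 - α) / (4 * β) * -(2 * β) = -((1 - α) / 2) := by field_simp; ring
  linarith

lemma mul_rpow_mul_rpow_le {α β K θ v A L : ℝ} (hK : 0 ≤ K) (hα : 0 ≤ α) (hθ : 0 < θ)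
    (hv : 0 < v) (hA : 0 ≤ A) (hAL : A ≤ L) :
    K * A ^ α * (θ * v) ^ (-(2 * β)) ≤ K * (θ ^ (-(2 * β)) * L ^ α * v ^ (-(2 * β))) := by
  rw [Real.mul_rpow hθ.le hv.le]
  calc K * A ^ α * (θ ^ (-(2 * β)) * v ^ (-(2 * β)))
      ≤ K * L ^ α * (θ ^ (-(2 * β)) * v ^ (-(2 * β))) := by gcongr
    _ = K * (θ ^ (-(2 * β)) * L ^ α * v ^ (-(2 * β))) := by ring

lemma halving_step_le {α β ρ c v A B L : ℝ} (hα : 1 < α) (hρ0 : 0 < ρ)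
    (hρ : 2 ^ (1 - α) * ρ ^ (-(2 * β)) < 1) (hc : 0 ≤ c) (hv : 0 < v) (hA : 0 ≤ A)
    (hAL : A ≤ L / 2) (hB : 0 ≤ B) (hBL : B ≤ L / 2) :
    halvingConst α β ρ c * A ^ α * (ρ * v) ^ (-(2 * β)) +
        halvingConst α β ρ c * B ^ α * (ρ * v) ^ (-(2 * β)) + c * L ^ α * v ^ (-(2 * β)) ≤
      halvingConst α β ρ c * L ^ α * v ^ (-(2 * β)) := by
  set K := halvingConst α β ρ c
  have hγ : 0 < 1 - 2 ^ (1 - α) * ρ ^ (-(2 * β)) := sub_pos.2 hρ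
  have hK0 : 0 ≤ K := div_nonneg hc hγ.le
  have hK : K * (1 - 2 ^ (1 - α) * ρ ^ (-(2 * β))) = c := div_mul_cancel₀ _ hγ.ne'
  have hL : 0 ≤ L := by linarith
  have hsum : A ^ α + B ^ α ≤ 2 ^ (1 - α) * L ^ α := by
    have hA' := Real.rpow_le_rpow (z := α) hA hAL (by linarith)
    have hB' := Real.rpow_le_rpow (z := α) hB hBL (by linarith)
    rw [Real.div_rpow hL zero_le_two] at hA' hB'
    rw [Real.rpow_sub two_pos, Real.rpow_one]
    have : (0 : ℝ) < 2 ^ α := by positivity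
    field_simp at hA' hB' ⊢
    linarith
  rw [Real.mul_rpow hρ0.le hv.le]
  calc K * A ^ α * (ρ ^ (-(2 * β)) * v ^ (-(2 * β))) +
        K * B ^ α * (ρ ^ (-(2 * β)) * v ^ (-(2 * β))) + c * L ^ α * v ^ (-(2 * β))
      = K * ρ ^ (-(2 * β)) * v ^ (-(2 * β)) * (A ^ α + B ^ α) + c * L ^ α * v ^ (-(2 * β)) := by
        ring
    _ ≤ K * ρ ^ (-(2 * β)) * v ^ (-(2 * β)) * (2 ^ (1 - α) * L ^ α) +
        c * L ^ α * v ^ (-(2 * β)) := by gcongr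
    _ = K * L ^ α * v ^ (-(2 * β)) := by rw [← hK]; ring

lemma sub_nonneg_and_le_of_monotoneOn {w : ℕ → ℝ} {n : ℕ} (hw : MonotoneOn w (Iic n))
    {a i k b : ℕ} (hai : a ≤ i) (hik : i ≤ k) (hkb : k ≤ b) (hbn : b ≤ n) :
    0 ≤ w k - w i ∧ w k - w i ≤ w b - w a := by
  have hw' : ∀ {x y}, x ≤ y → y ≤ b → w x ≤ w y := fun hxy hyb =>
    hw (mem_Iic.2 ((hxy.trans hyb).trans hbn)) (mem_Iic.2 (hyb.trans hbn)) hxy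
  have := hw' hai (hik.trans hkb)
  have := hw' hik hkb
  have := hw' hkb le_rfl
  constructor <;> linarith

lemma exists_halving_split {w : ℕ → ℝ} {n a b : ℕ} (hw : MonotoneOn w (Iic n)) (hab : a < b)
    (hbn : b ≤ n) :
    ∃ h, a ≤ h ∧ h < b ∧ w h - w a ≤ (w b - w a) / 2 ∧ w b - w (h + 1) ≤ (w b - w a) / 2 := by
  classical
  let Left : ℕ → Prop := fun t => w t - w a ≤ (w b - w a) / 2
  have hLeft_a : Left a := by
    have : w a ≤ w b := hw (mem_Iic.2 (by omega)) (mem_Iic.2 hbn) hab.le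
    simp only [Left]; linarith
  set h := Nat.findGreatest Left (b - 1)
  have hhb : h < b := by have := Nat.findGreatest_le (P := Left) (b - 1); omega
  refine ⟨h, Nat.le_findGreatest (by omega) hLeft_a, hhb,
    Nat.findGreatest_spec (by omega) hLeft_a, ?_⟩
  rcases (show h + 1 ≤ b from hhb).eq_or_lt with hb | hb
  · rw [hb]; linarith
  · have := Nat.findGreatest_is_greatest (Nat.lt_succ_self h) (by omega : h + 1 ≤ b - 1)
    simp only [Left, not_le] at this
    linarith

theorem le_halvingConst_of_split {α β ρ c : ℝ} (hα : 1 < α) (hρ0 : 0 < ρ)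
    (hρ : 2 ^ (1 - α) * ρ ^ (-(2 * β)) < 1) (hc : 0 ≤ c) {n : ℕ} {w : ℕ → ℝ}
    (hw : MonotoneOn w (Iic n)) {Q : ℕ → ℕ → ℝ → ENNReal}
    (hQ_self : ∀ a v, 0 < v → Q a a v = 0)
    (hQ_split : ∀ a h b v, a ≤ h → h < b → b ≤ n → 0 < v →
      Q a b v ≤ Q a h (ρ * v) + Q (h + 1) b (ρ * v) +
        ENNReal.ofReal (c * (w b - w a) ^ α * v ^ (-(2 * β))))
    {a b : ℕ} (hab : a ≤ b) (hbn : b ≤ n) {v : ℝ} (hv : 0 < v) :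
    Q a b v ≤ ENNReal.ofReal (halvingConst α β ρ c * (w b - w a) ^ α * v ^ (-(2 * β))) := by
  set K := halvingConst α β ρ c
  have hK : 0 ≤ K := div_nonneg hc (sub_pos.2 hρ).le
  induction hd : b - a using Nat.strong_induction_on generalizing a b v with
  | _ d ih =>
  rcases hab.eq_or_lt with rfl | hab
  · simp [hQ_self a v hv]
  obtain ⟨h, hah, hhb, hleft, hright⟩ := exists_halving_split hw hab hbn
  have hA := (sub_nonneg_and_le_of_monotoneOn hw le_rfl hah hhb.le hbn).1
  have hB := (sub_nonneg_and_le_of_monotoneOn hw (Nat.le_succ_of_le hah) hhb le_rfl hbn).1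
  have hL := (sub_nonneg_and_le_of_monotoneOn hw le_rfl hab.le le_rfl hbn).1
  have hρv : 0 < ρ * v := mul_pos hρ0 hv
  calc Q a b v
      ≤ Q a h (ρ * v) + Q (h + 1) b (ρ * v) +
          ENNReal.ofReal (c * (w b - w a) ^ α * v ^ (-(2 * β))) :=
        hQ_split a h b v hah hhb hbn hv
    _ ≤ ENNReal.ofReal (K * (w h - w a) ^ α * (ρ * v) ^ (-(2 * β))) +
          ENNReal.ofReal (K * (w b - w (h + 1)) ^ α * (ρ * v) ^ (-(2 * β))) +
          ENNReal.ofReal (c * (w b - w a) ^ α * v ^ (-(2 * β))) := by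
        gcongr
        · exact ih (h - a) (by omega) hah (by omega) hρv rfl
        · exact ih (b - (h + 1)) (by omega) hhb hbn hρv rfl
    _ ≤ ENNReal.ofReal (K * (w b - w a) ^ α * v ^ (-(2 * β))) := by
        rw [← ENNReal.ofReal_add (by positivity) (by positivity),
          ← ENNReal.ofReal_add (by positivity) (by positivity)]
        exact ENNReal.ofReal_le_ofReal (halving_step_le hα hρ0 hρ hc hv hA hleft hB hright)

noncomputable def endpointConst (α β : ℝ) : ℝ :=
  halvingConst α β (halvingRatio α β) (2 * (1 - halvingRatio α β) ^ (-(2 * β)))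

lemma endpointConst_pos {α β : ℝ} (hα : 1 < α) (hβ : 0 < β) : 0 < endpointConst α β :=
  halvingConst_pos (two_rpow_mul_halvingRatio_rpow_lt_one hα hβ)
    (by have := halvingRatio_lt_one hα hβ; positivity)

section Fluctuation

variable {Ω : Type*} (η : ℕ → Ω → ℝ)

def endpointFluctuationSet (a b : ℕ) (v : ℝ) : Set Ω :=
  {ω | ∃ j ∈ Icc a b, v < minIncr (η · ω) a j b}

def fluctuationSet (a b : ℕ) (v : ℝ) : Set Ω :=
  {ω | ∃ i j k, a ≤ i ∧ i ≤ j ∧ j ≤ k ∧ k ≤ b ∧ v < minIncr (η · ω) i j k}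

/-- Hypothesis (3.3) for a process indexed by `0, …, n`, with weights `w`. -/
def MinIncrTailBound [MeasurableSpace Ω] (P : Measure Ω) (w : ℕ → ℝ) (α β : ℝ) (n : ℕ) : Prop :=
  ∀ i j k, i ≤ j → j ≤ k → k ≤ n → ∀ v, 0 < v →
    P {ω | v < minIncr (η · ω) i j k} ≤ ENNReal.ofReal ((w k - w i) ^ α * v ^ (-(2 * β)))

variable {η}

lemma endpointFluctuationSet_self (a : ℕ) {v : ℝ} (hv : 0 ≤ v) :
    endpointFluctuationSet η a a v = ∅ := by
  ext ω
  simp only [endpointFluctuationSet, Icc_self, mem_singleton_iff, exists_eq_left, minIncr,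
    sub_self, abs_zero, min_self, mem_ofPred_eq, mem_empty_iff_false, iff_false, not_lt, hv]

lemma fluctuationSet_self (a : ℕ) {v : ℝ} (hv : 0 ≤ v) : fluctuationSet η a a v = ∅ := by
  ext ω
  simp only [fluctuationSet, mem_ofPred_eq, mem_empty_iff_false, iff_false]
  rintro ⟨i, j, k, hai, hij, hjk, hka, hlt⟩
  obtain ⟨rfl, rfl, rfl⟩ : i = a ∧ j = a ∧ k = a := by omega
  simp only [minIncr, sub_self, abs_zero, min_self] at hlt
  linarith

lemma minIncr_le_of_not_mem_endpointFluctuationSet {a b j : ℕ} {v : ℝ} {ω : Ω}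
    (hω : ω ∉ endpointFluctuationSet η a b v) (haj : a ≤ j) (hjb : j ≤ b) :
    minIncr (η · ω) a j b ≤ v :=
  not_lt.1 fun h => hω ⟨j, ⟨haj, hjb⟩, h⟩

lemma minIncr_le_of_not_mem_fluctuationSet {a b i j k : ℕ} {v : ℝ} {ω : Ω}
    (hω : ω ∉ fluctuationSet η a b v) (hai : a ≤ i) (hij : i ≤ j) (hjk : j ≤ k) (hkb : k ≤ b) :
    minIncr (η · ω) i j k ≤ v :=
  not_lt.1 fun h => hω ⟨i, j, k, hai, hij, hjk, hkb, h⟩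

lemma endpointFluctuationSet_subset {a h b : ℕ} {s t v : ℝ} (hstv : s + t ≤ v) :
    endpointFluctuationSet η a b v ⊆
      endpointFluctuationSet η a h s ∪ endpointFluctuationSet η (h + 1) b s ∪
        ({ω | t < minIncr (η · ω) a h b} ∪ {ω | t < minIncr (η · ω) a (h + 1) b}) := by
  rintro ω ⟨j, ⟨haj, hjb⟩, hj⟩
  by_contra hω
  simp only [mem_union, not_or, mem_ofPred_eq, not_lt] at hω
  obtain ⟨⟨hleft, hright⟩, hh, hh1⟩ := hω
  rcases le_or_gt j h with hjh | hjh
  · have := minIncr_le_add_left (η · ω) a j h b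
    have := minIncr_le_of_not_mem_endpointFluctuationSet hleft haj hjh
    linarith
  · have := minIncr_le_add_right (η · ω) a j (h + 1) b
    have := minIncr_le_of_not_mem_endpointFluctuationSet hright hjh hjb
    linarith

lemma fluctuationSet_subset {a h b : ℕ} {s t v : ℝ} (ht : 0 ≤ t) (hstv : s + 2 * t ≤ v) :
    fluctuationSet η a b v ⊆
      fluctuationSet η a h s ∪ fluctuationSet η (h + 1) b s ∪
        (endpointFluctuationSet η a h t ∪ endpointFluctuationSet η (h + 1) b t ∪
          ({ω | t < minIncr (η · ω) a h (h + 1)} ∪ {ω | t < minIncr (η · ω) a h b} ∪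
            ({ω | t < minIncr (η · ω) h (h + 1) b} ∪ {ω | t < minIncr (η · ω) a (h + 1) b}))) := by
  rintro ω ⟨i, j, k, hai, hij, hjk, hkb, hlt⟩
  by_contra hω
  simp only [mem_union, not_or, mem_ofPred_eq, not_lt] at hω
  obtain ⟨⟨hleft, hright⟩, ⟨hEleft, hEright⟩, ⟨h₁, h₂⟩, h₃, h₄⟩ := hω
  rcases le_or_gt k h with hkh | hkh
  · linarith [minIncr_le_of_not_mem_fluctuationSet hleft hai hij hjk hkh]
  rcases le_or_gt (h + 1) i with hhi | hih
  · linarith [minIncr_le_of_not_mem_fluctuationSet hright hhi hij hjk hkb]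
  have hik := minIncr_le_of_not_mem_endpointFluctuationSet hEleft hai (Nat.lt_succ_iff.1 hih)
  have hki := minIncr_le_of_not_mem_endpointFluctuationSet hEright hkh hkb
  rcases le_or_gt j h with hjh | hjh
  · have := minIncr_le_add_left (η · ω) i j h k
    have := minIncr_le_of_not_mem_fluctuationSet hleft hai hij hjh le_rfl
    have := minIncr_le_two_mul (η · ω) hik hki h₁ h₂
    linarith
  · have := minIncr_le_add_right (η · ω) i j (h + 1) k
    have := minIncr_le_of_not_mem_fluctuationSet hright le_rfl hjh hjk hkb
    have := minIncr_le_two_mul (η · ω) ((minIncr_comm _ _ _ _).trans_le hki)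
      ((minIncr_comm _ _ _ _).trans_le hik) ((minIncr_comm _ _ _ _).trans_le h₃)
      ((minIncr_comm _ _ _ _).trans_le h₄)
    rw [minIncr_comm] at this
    linarith

variable [MeasurableSpace Ω] {P : Measure Ω} {w : ℕ → ℝ} {α β : ℝ} {n : ℕ}

lemma MinIncrTailBound.measure_lt_le (hT : MinIncrTailBound η P w α β n)
    (hw : MonotoneOn w (Iic n)) (hα : 0 ≤ α) {a i j k b : ℕ} (hai : a ≤ i) (hij : i ≤ j)
    (hjk : j ≤ k) (hkb : k ≤ b) (hbn : b ≤ n) {θ v : ℝ} (hθ : 0 < θ) (hv : 0 < v) :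
    P {ω | θ * v < minIncr (η · ω) i j k} ≤
      ENNReal.ofReal (θ ^ (-(2 * β)) * (w b - w a) ^ α * v ^ (-(2 * β))) := by
  obtain ⟨h0, hle⟩ := sub_nonneg_and_le_of_monotoneOn hw hai (hij.trans hjk) hkb hbn
  refine (hT i j k hij hjk (hkb.trans hbn) _ (mul_pos hθ hv)).trans (ENNReal.ofReal_le_ofReal ?_)
  simpa using mul_rpow_mul_rpow_le (β := β) zero_le_one hα hθ hv h0 hle

lemma measure_endpointFluctuationSet_split (hT : MinIncrTailBound η P w α β n)
    (hw : MonotoneOn w (Iic n)) (hα : 0 ≤ α) {ρ : ℝ} (hρ : ρ < 1) {a h b : ℕ} (hah : a ≤ h)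
    (hhb : h < b) (hbn : b ≤ n) {v : ℝ} (hv : 0 < v) :
    P (endpointFluctuationSet η a b v) ≤
      P (endpointFluctuationSet η a h (ρ * v)) + P (endpointFluctuationSet η (h + 1) b (ρ * v)) +
        ENNReal.ofReal (2 * (1 - ρ) ^ (-(2 * β)) * (w b - w a) ^ α * v ^ (-(2 * β))) := by
  have hθ : 0 < 1 - ρ := sub_pos.2 hρ
  have hL := (sub_nonneg_and_le_of_monotoneOn hw le_rfl (hah.trans hhb.le) le_rfl hbn).1
  set X := (1 - ρ) ^ (-(2 * β)) * (w b - w a) ^ α * v ^ (-(2 * β)) with hX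
  have hT₁ : P {ω | (1 - ρ) * v < minIncr (η · ω) a h b} ≤ ENNReal.ofReal X :=
    hT.measure_lt_le hw hα le_rfl hah hhb.le le_rfl hbn hθ hv
  have hT₂ : P {ω | (1 - ρ) * v < minIncr (η · ω) a (h + 1) b} ≤ ENNReal.ofReal X :=
    hT.measure_lt_le hw hα le_rfl (Nat.le_succ_of_le hah) hhb le_rfl hbn hθ hv
  calc P (endpointFluctuationSet η a b v)
      ≤ P (endpointFluctuationSet η a h (ρ * v) ∪ endpointFluctuationSet η (h + 1) b (ρ * v) ∪
          ({ω | (1 - ρ) * v < minIncr (η · ω) a h b} ∪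
            {ω | (1 - ρ) * v < minIncr (η · ω) a (h + 1) b})) :=
        measure_mono (endpointFluctuationSet_subset (by linarith))
    _ ≤ P (endpointFluctuationSet η a h (ρ * v)) + P (endpointFluctuationSet η (h + 1) b (ρ * v)) +
          (ENNReal.ofReal X + ENNReal.ofReal X) := by
        repeat grw [measure_union_le]
        grw [hT₁, hT₂]
    _ = _ := by
        rw [show 2 * (1 - ρ) ^ (-(2 * β)) * (w b - w a) ^ α * v ^ (-(2 * β)) = X + X by
          rw [hX]; ring, ENNReal.ofReal_add (by positivity) (by positivity)]

theorem measure_endpointFluctuationSet_le (hα : 1 < α) (hβ : 0 < β)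
    (hT : MinIncrTailBound η P w α β n) (hw : MonotoneOn w (Iic n)) {a b : ℕ} (hab : a ≤ b)
    (hbn : b ≤ n) {v : ℝ} (hv : 0 < v) :
    P (endpointFluctuationSet η a b v) ≤
      ENNReal.ofReal (endpointConst α β * (w b - w a) ^ α * v ^ (-(2 * β))) :=
  le_halvingConst_of_split (Q := fun a b v => P (endpointFluctuationSet η a b v)) hα
    (halvingRatio_pos α β) (two_rpow_mul_halvingRatio_rpow_lt_one hα hβ)
    (by have := halvingRatio_lt_one hα hβ; positivity) hw
    (fun a v hv => by simp only [endpointFluctuationSet_self a hv.le, measure_empty])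
    (fun _ _ _ _ hah hhb hbn hv => measure_endpointFluctuationSet_split hT hw (by linarith)
      (halvingRatio_lt_one hα hβ) hah hhb hbn hv)
    hab hbn hv

lemma measure_endpointFluctuationSet_mul_le (hα : 1 < α) (hβ : 0 < β)
    (hT : MinIncrTailBound η P w α β n) (hw : MonotoneOn w (Iic n)) {a a' b' b : ℕ}
    (haa' : a ≤ a') (ha'b' : a' ≤ b') (hb'b : b' ≤ b) (hbn : b ≤ n) {θ v : ℝ} (hθ : 0 < θ)
    (hv : 0 < v) :
    P (endpointFluctuationSet η a' b' (θ * v)) ≤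
      ENNReal.ofReal (endpointConst α β * (θ ^ (-(2 * β)) * (w b - w a) ^ α * v ^ (-(2 * β)))) := by
  obtain ⟨h0, hle⟩ := sub_nonneg_and_le_of_monotoneOn hw haa' ha'b' hb'b hbn
  exact (measure_endpointFluctuationSet_le hα hβ hT hw ha'b' (hb'b.trans hbn)
    (mul_pos hθ hv)).trans (ENNReal.ofReal_le_ofReal
      (mul_rpow_mul_rpow_le (endpointConst_pos hα hβ).le (by linarith) hθ hv h0 hle))

lemma measure_fluctuationSet_split (hα : 1 < α) (hβ : 0 < β) (hT : MinIncrTailBound η P w α β n)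
    (hw : MonotoneOn w (Iic n)) {a h b : ℕ} (hah : a ≤ h) (hhb : h < b) (hbn : b ≤ n) {v : ℝ}
    (hv : 0 < v) :
    P (fluctuationSet η a b v) ≤
      P (fluctuationSet η a h (halvingRatio α β * v)) +
        P (fluctuationSet η (h + 1) b (halvingRatio α β * v)) +
        ENNReal.ofReal ((2 * endpointConst α β + 4) * ((1 - halvingRatio α β) / 2) ^ (-(2 * β)) *
          (w b - w a) ^ α * v ^ (-(2 * β))) := by
  set ρ := halvingRatio α β
  set θ := (1 - ρ) / 2 with hθ_def
  set K := endpointConst α β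
  have hθ : 0 < θ := by have := halvingRatio_lt_one hα hβ; positivity
  have hα0 : 0 ≤ α := by linarith
  have hK : 0 ≤ K := (endpointConst_pos hα hβ).le
  have hL := (sub_nonneg_and_le_of_monotoneOn hw le_rfl (hah.trans hhb.le) le_rfl hbn).1
  set X := θ ^ (-(2 * β)) * (w b - w a) ^ α * v ^ (-(2 * β)) with hX
  have hE₁ : P (endpointFluctuationSet η a h (θ * v)) ≤ ENNReal.ofReal (K * X) :=
    measure_endpointFluctuationSet_mul_le hα hβ hT hw le_rfl hah hhb.le hbn hθ hv
  have hE₂ : P (endpointFluctuationSet η (h + 1) b (θ * v)) ≤ ENNReal.ofReal (K * X) :=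
    measure_endpointFluctuationSet_mul_le hα hβ hT hw (Nat.le_succ_of_le hah) hhb le_rfl hbn hθ hv
  have hT₁ : P {ω | θ * v < minIncr (η · ω) a h (h + 1)} ≤ ENNReal.ofReal X :=
    hT.measure_lt_le hw hα0 le_rfl hah (Nat.le_succ h) hhb hbn hθ hv
  have hT₂ : P {ω | θ * v < minIncr (η · ω) a h b} ≤ ENNReal.ofReal X :=
    hT.measure_lt_le hw hα0 le_rfl hah hhb.le le_rfl hbn hθ hv
  have hT₃ : P {ω | θ * v < minIncr (η · ω) h (h + 1) b} ≤ ENNReal.ofReal X :=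
    hT.measure_lt_le hw hα0 hah (Nat.le_succ h) hhb le_rfl hbn hθ hv
  have hT₄ : P {ω | θ * v < minIncr (η · ω) a (h + 1) b} ≤ ENNReal.ofReal X :=
    hT.measure_lt_le hw hα0 le_rfl (Nat.le_succ_of_le hah) hhb le_rfl hbn hθ hv
  calc P (fluctuationSet η a b v)
      ≤ P (fluctuationSet η a h (ρ * v) ∪ fluctuationSet η (h + 1) b (ρ * v) ∪
          (endpointFluctuationSet η a h (θ * v) ∪ endpointFluctuationSet η (h + 1) b (θ * v) ∪
            ({ω | θ * v < minIncr (η · ω) a h (h + 1)} ∪ {ω | θ * v < minIncr (η · ω) a h b} ∪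
              ({ω | θ * v < minIncr (η · ω) h (h + 1) b} ∪
                {ω | θ * v < minIncr (η · ω) a (h + 1) b})))) :=
        measure_mono (fluctuationSet_subset (by positivity) (le_of_eq (by rw [hθ_def]; ring)))
    _ ≤ P (fluctuationSet η a h (ρ * v)) + P (fluctuationSet η (h + 1) b (ρ * v)) +
          (ENNReal.ofReal (K * X) + ENNReal.ofReal (K * X) +
            (ENNReal.ofReal X + ENNReal.ofReal X + (ENNReal.ofReal X + ENNReal.ofReal X))) := by
        repeat grw [measure_union_le]
        grw [hE₁, hE₂, hT₁, hT₂, hT₃, hT₄]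
    _ = _ := by
        rw [show (2 * K + 4) * θ ^ (-(2 * β)) * (w b - w a) ^ α * v ^ (-(2 * β)) =
          K * X + K * X + (X + X + (X + X)) by rw [hX]; ring]
        repeat rw [ENNReal.ofReal_add (by positivity) (by positivity)]

noncomputable def fluctuationConst (α β : ℝ) : ℝ :=
  halvingConst α β (halvingRatio α β)
    ((2 * endpointConst α β + 4) * ((1 - halvingRatio α β) / 2) ^ (-(2 * β)))

lemma fluctuationConst_pos {α β : ℝ} (hα : 1 < α) (hβ : 0 < β) : 0 < fluctuationConst α β :=
  halvingConst_pos (two_rpow_mul_halvingRatio_rpow_lt_one hα hβ)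
    (by have := endpointConst_pos hα hβ; have := halvingRatio_lt_one hα hβ; positivity)

theorem measure_fluctuationSet_le (hα : 1 < α) (hβ : 0 < β) (hT : MinIncrTailBound η P w α β n)
    (hw : MonotoneOn w (Iic n)) {a b : ℕ} (hab : a ≤ b) (hbn : b ≤ n) {v : ℝ} (hv : 0 < v) :
    P (fluctuationSet η a b v) ≤
      ENNReal.ofReal (fluctuationConst α β * (w b - w a) ^ α * v ^ (-(2 * β))) :=
  le_halvingConst_of_split (Q := fun a b v => P (fluctuationSet η a b v)) hα
    (halvingRatio_pos α β) (two_rpow_mul_halvingRatio_rpow_lt_one hα hβ)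
    (by have := endpointConst_pos hα hβ; have := halvingRatio_lt_one hα hβ; positivity) hw
    (fun a v hv => by simp only [fluctuationSet_self a hv.le, measure_empty])
    (fun _ _ _ _ hah hhb hbn hv => measure_fluctuationSet_split hα hβ hT hw hah hhb hbn hv)
    hab hbn hv

end Fluctuation

lemma Rat.exists_natCast_div_eq {q : ℚ} (hq : 0 ≤ q) {N : ℕ} (hN : N ≠ 0) (hdvd : q.den ∣ N) :
    ∃ i : ℕ, (q : ℝ) = i / N := by
  obtain ⟨c, rfl⟩ := hdvd
  have hc : (c : ℝ) ≠ 0 := by exact_mod_cast right_ne_zero_of_mul hN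
  refine ⟨q.num.toNat * c, ?_⟩
  have hnum : ((q.num.toNat : ℕ) : ℝ) = q.num := by
    exact_mod_cast Int.toNat_of_nonneg (Rat.num_nonneg.2 hq)
  rw [Nat.cast_mul, Nat.cast_mul, mul_div_mul_right _ _ hc, hnum, Rat.cast_def]

section Grid

variable {Ω : Type*}

noncomputable def gridProcess (ξ : ℝ → Ω → ℝ) (N : ℕ) : ℕ → Ω → ℝ :=
  fun j => ξ (j / N)

lemma procDelta_eq_minIncr_gridProcess (ξ : ℝ → Ω → ℝ) (N i j k : ℕ) (ω : Ω) :
    procDelta ξ (i / N) (j / N) (k / N) ω = minIncr (gridProcess ξ N · ω) i j k :=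
  rfl

lemma fluctuationSet_gridProcess_subset (ξ : ℝ → Ω → ℝ) (u : ℝ) {M N : ℕ} (hMN : M ∣ N)
    (hN : N ≠ 0) :
    fluctuationSet (gridProcess ξ M) 0 M u ⊆ fluctuationSet (gridProcess ξ N) 0 N u := by
  obtain ⟨c, rfl⟩ := hMN
  have hc : (c : ℝ) ≠ 0 := by exact_mod_cast right_ne_zero_of_mul hN
  rintro ω ⟨i, j, k, -, hij, hjk, hkM, hlt⟩
  refine ⟨i * c, j * c, k * c, Nat.zero_le _, Nat.mul_le_mul_right c hij,
    Nat.mul_le_mul_right c hjk, Nat.mul_le_mul_right c hkM, ?_⟩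
  simpa only [minIncr, gridProcess, Nat.cast_mul, mul_div_mul_right _ _ hc] using hlt

lemma monotone_fluctuationSet_gridProcess_factorial (ξ : ℝ → Ω → ℝ) (u : ℝ) :
    Monotone fun m : ℕ => fluctuationSet (gridProcess ξ m.factorial) 0 m.factorial u :=
  fun _ _ hmm' => fluctuationSet_gridProcess_subset ξ u (Nat.factorial_dvd_factorial hmm')
    (Nat.factorial_ne_zero _)

lemma deltaGt_subset_iUnion_fluctuationSet_gridProcess (ξ : ℝ → Ω → ℝ) (u : ℝ) :
    DeltaGt ξ u ⊆ ⋃ m : ℕ, fluctuationSet (gridProcess ξ m.factorial) 0 m.factorial u := by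
  rintro ω ⟨r, s, t, h0r, hrs, hst, ht1, hlt⟩
  set m := r.den * s.den * t.den
  have hNpos : (0 : ℝ) < m.factorial := by positivity
  have hm : m ∣ m.factorial := Nat.dvd_factorial (by positivity) le_rfl
  obtain ⟨i, hi⟩ := Rat.exists_natCast_div_eq (by exact_mod_cast h0r) (Nat.factorial_ne_zero m)
    (((dvd_mul_right _ _).mul_right _).trans hm)
  obtain ⟨j, hj⟩ := Rat.exists_natCast_div_eq (by exact_mod_cast h0r.trans hrs)
    (Nat.factorial_ne_zero m) (((dvd_mul_left _ _).mul_right _).trans hm)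
  obtain ⟨k, hk⟩ := Rat.exists_natCast_div_eq (by exact_mod_cast (h0r.trans hrs).trans hst)
    (Nat.factorial_ne_zero m) ((dvd_mul_left _ _).trans hm)
  rw [hi, hj] at hrs
  rw [hj, hk] at hst
  rw [hk] at ht1
  rw [hi, hj, hk, procDelta_eq_minIncr_gridProcess] at hlt
  exact mem_iUnion.2 ⟨m, i, j, k, Nat.zero_le _,
    by exact_mod_cast (div_le_div_iff_of_pos_right hNpos).1 hrs,
    by exact_mod_cast (div_le_div_iff_of_pos_right hNpos).1 hst,
    by exact_mod_cast (div_le_one hNpos).1 ht1, hlt⟩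

lemma measure_fluctuationSet_gridProcess_le [MeasurableSpace Ω] {P : Measure Ω}
    {ξ : ℝ → Ω → ℝ} {G : ℝ → ℝ} {α β : ℝ} (hα : 1 < α) (hβ : 0 < β)
    (hG : MonotoneOn G (Icc 0 1))
    (hξ : ∀ r s t : ℝ, 0 ≤ r → r ≤ s → s ≤ t → t ≤ 1 → ∀ u : ℝ, 0 < u →
      P {ω | u < procDelta ξ r s t ω} ≤ ENNReal.ofReal ((G t - G r) ^ α * u ^ (-(2 * β))))
    {N : ℕ} (hN : 0 < N) {u : ℝ} (hu : 0 < u) :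
    P (fluctuationSet (gridProcess ξ N) 0 N u) ≤
      ENNReal.ofReal (fluctuationConst α β * (G 1 - G 0) ^ α * u ^ (-(2 * β))) := by
  have hNR : (0 : ℝ) < N := by exact_mod_cast hN
  have hmem : ∀ {j : ℕ}, j ≤ N → (j / N : ℝ) ∈ Icc 0 1 := fun hj =>
    ⟨by positivity, (div_le_one hNR).2 (by exact_mod_cast hj)⟩
  have hle : ∀ {i j : ℕ}, i ≤ j → (i / N : ℝ) ≤ j / N := fun hij =>
    div_le_div_of_nonneg_right (by exact_mod_cast hij) hNR.le
  have hw : MonotoneOn (fun j : ℕ => G (j / N)) (Iic N) := fun i hi j hj hij =>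
    hG (hmem hi) (hmem hj) (hle hij)
  have hT : MinIncrTailBound (gridProcess ξ N) P (fun j : ℕ => G (j / N)) α β N :=
    fun i j k hij hjk hkN v hv => hξ _ _ _ (hmem (hij.trans (hjk.trans hkN))).1 (hle hij)
      (hle hjk) (hmem hkN).2 v hv
  simpa [hNR.ne'] using measure_fluctuationSet_le hα hβ hT hw (Nat.zero_le N) le_rfl hu

end Grid

/-- Proposition 3.0, conclusion (3.4): there is a finite constant `K = K(α,β)`, depending only
on `α` and `β`, such that for any probability space, any process `ξ` and any continuous
increasing `G` satisfying the tail hypothesis (3.3), one has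
`P(Δ[ξ] > u) ≤ K · u^{-2β} · (G(1) - G(0))^α` for all `u > 0`. -/
theorem proposition_3_0 (α β : ℝ) (hα : 1 < α) (hβ : 0 < β) :
    ∃ K : ℝ, 0 < K ∧
      ∀ (Ω : Type) [MeasurableSpace Ω] (P : Measure Ω), IsProbabilityMeasure P →
      ∀ (ξ : ℝ → Ω → ℝ) (G : ℝ → ℝ),
        ContinuousOn G (Icc 0 1) → StrictMonoOn G (Icc 0 1) →
        (∀ r s t : ℝ, 0 ≤ r → r ≤ s → s ≤ t → t ≤ 1 → ∀ u : ℝ, 0 < u →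
          P {ω | u < procDelta ξ r s t ω} ≤
            ENNReal.ofReal ((G t - G r) ^ α * u ^ (-(2 * β)))) →
        ∀ u : ℝ, 0 < u →
          P (DeltaGt ξ u) ≤ ENNReal.ofReal (K * u ^ (-(2 * β)) * (G 1 - G 0) ^ α) := by
  refine ⟨fluctuationConst α β, fluctuationConst_pos hα hβ, ?_⟩
  intro Ω _ P _ ξ G _ hG hξ u hu
  calc P (DeltaGt ξ u)
      ≤ P (⋃ m : ℕ, fluctuationSet (gridProcess ξ m.factorial) 0 m.factorial u) :=
        measure_mono (deltaGt_subset_iUnion_fluctuationSet_gridProcess ξ u)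
    _ = ⨆ m : ℕ, P (fluctuationSet (gridProcess ξ m.factorial) 0 m.factorial u) :=
        (monotone_fluctuationSet_gridProcess_factorial ξ u).measure_iUnion
    _ ≤ ENNReal.ofReal (fluctuationConst α β * u ^ (-(2 * β)) * (G 1 - G 0) ^ α) :=
        iSup_le fun m => (measure_fluctuationSet_gridProcess_le hα hβ hG.monotoneOn hξ
          m.factorial_pos hu).trans_eq (by rw [mul_right_comm])
end

section
/- Let (ξ_t)_{t∈[0,1]} be a family of real-valued random variables on a probability space (Ω, 𝓕, P), let b ∈ (2, ∞], and suppose ν(p) := sup over all 0 ≤ r ≤ s ≤ t ≤ 1 of (E|δ[ξ](r,s,t)|^p)^{1/p} is finite for every p ∈ [2, b). Let G : [0,1] → ℝ be a continuous increasing function with G(0) = 0 such that for all 0 ≤ r ≤ s ≤ t ≤ 1 and all p ∈ [2, b): (E|δ[ξ](r,s,t)|^p)^{1/p} ≤ (G(t) − G(r)) · ν(p). Then for every p ∈ [2, b) there exists a finite constant K_p, depending only on p, such that for all u > 0 and all h ∈ (0,1]: P(κ[ξ](h) > u) ≤ 2 · K_p · u^{−p} · ν(p)^p · (G(1) − G(0))^p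 · (ω[G](2h))^{p−1}. In particular, for every ε > 0, P(κ[ξ](h) > ε) → 0 as h → 0⁺. -/
open MeasureTheory Set Filter ENNReal

/-- The event `{κ[ξ](h) > u}`, where `κ[ξ](h)` is the Prokhorov–Skorokhod modulus: the
supremum of `min(|ξ_t - ξ_{t₁}|, |ξ_{t₂} - ξ_t|)` over all rational triples
`0 ≤ t₁ ≤ t ≤ t₂ ≤ min(t₁ + h, 1)`; the supremum exceeds `u` iff some triple does. -/
def KappaGt {Ω : Type*} (ξ : ℝ → Ω → ℝ) (h u : ℝ) : Set Ω :=
  {ω | ∃ t₁ t t₂ : ℚ, 0 ≤ (t₁ : ℝ) ∧ (t₁ : ℝ) ≤ (t : ℝ) ∧ (t : ℝ) ≤ (t₂ : ℝ) ∧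
    (t₂ : ℝ) ≤ (t₁ : ℝ) + h ∧ (t₂ : ℝ) ≤ 1 ∧
    u < min |ξ t ω - ξ t₁ ω| |ξ t₂ ω - ξ t ω|}

/-- `ω[G](h)`, the ordinary modulus of continuity of `G : [0,1] → ℝ`. -/
noncomputable def contModulus (G : ℝ → ℝ) (h : ℝ) : ℝ :=
  sSup {x : ℝ | ∃ r t : ℝ, r ∈ Icc (0 : ℝ) 1 ∧ t ∈ Icc (0 : ℝ) 1 ∧ |r - t| ≤ h ∧ x = |G t - G r|}

/-- `(E |δ[ξ](r,s,t)|^p)^{1/p}`, as an extended nonnegative real. -/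
noncomputable def tripleMoment {Ω : Type*} [MeasurableSpace Ω] (P : Measure Ω)
    (ξ : ℝ → Ω → ℝ) (p r s t : ℝ) : ℝ≥0∞ :=
  (∫⁻ ω, ENNReal.ofReal (procDelta ξ r s t ω ^ p) ∂P) ^ (1 / p)

/-- `ν(p)`: the supremum over all triples `0 ≤ r ≤ s ≤ t ≤ 1` of `(E |δ[ξ](r,s,t)|^p)^{1/p}`. -/
noncomputable def nuFun {Ω : Type*} [MeasurableSpace Ω] (P : Measure Ω)
    (ξ : ℝ → Ω → ℝ) (p : ℝ) : ℝ≥0∞ :=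
  ⨆ (r : ℝ) (s : ℝ) (t : ℝ) (_ : 0 ≤ r ∧ r ≤ s ∧ s ≤ t ∧ t ≤ 1), tripleMoment P ξ p r s t

open Topology

/-!
Chaining over grids of equal `G`-mass. Cut `[A, B]` into 18 cells of equal `G`-mass. A point of a
finite `S ⊆ [A, B]` with small `δ` on its cell is close to one of the cell's endpoints, so a triple
of `S` with `δ > l` produces a triple with `δ > l/3` inside one cell (with its endpoints added) or
among the 19 grid points. By Markov's inequality the grid costs `19³ 3^p ((G B - G A) ν / l)^p`,
while the cells cost `18 · 6^{-p} ≤ 1/2` times the bound being proved. Iterating, and closing the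
recursion with the union bound `#S³`, whose weight `2^{-N}` vanishes, gives
`P(max_S δ > l) ≤ 2 · 19³ 3^p ((G B - G A) ν / l)^p` uniformly in `S`, hence for the rational
triples of `[A, B]`.

The triples of length `≤ h` lie in windows `[i h, (i + 2) h]` of `G`-mass `mᵢ ≤ ω[G](2h)`, and
`∑ mᵢ^p ≤ ω[G](2h)^{p-1} ∑ mᵢ ≤ 2 ω[G](2h)^{p-1} (G(1) - G(0))`. Finally the hypothesis gives
`ν ≤ (G(1) - G(0)) ν`, so `ν = 0` or `G(1) - G(0) ≥ 1`; either way `G(1) - G(0)` may be replaced by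
its `p`-th power.
-/

lemma min_abs_sub_le_of_abs_sub_le {x y z x' y' z' a c : ℝ} (hx : |x - x'| ≤ a)
    (hy : |y - y'| ≤ a) (hz : |z - z'| ≤ a) (h : min |y' - x'| |z' - y'| ≤ c) :
    min |y - x| |z - y| ≤ 2 * a + c := by
  have shift : ∀ {u v u' v' : ℝ}, |u - u'| ≤ a → |v - v'| ≤ a → |v - u| ≤ |v' - u'| + 2 * a := by
    intro u v u' v' hu hv
    calc |v - u| = |(v' - u') + (v - v') + (u' - u)| := by ring_nf
      _ ≤ |v' - u'| + |v - v'| + |u' - u| := abs_add_three _ _ _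
      _ ≤ |v' - u'| + 2 * a := by rw [abs_sub_comm u']; linarith
  rcases min_le_iff.1 h with h | h
  · exact (min_le_left _ _).trans (by linarith [shift hx hy])
  · exact (min_le_right _ _).trans (by linarith [shift hy hz])

lemma rpow_le_rpow_sub_one_mul {x w p : ℝ} (hx : 0 ≤ x) (hxw : x ≤ w) (hp : 1 ≤ p) :
    x ^ p ≤ w ^ (p - 1) * x :=
  calc x ^ p = x ^ (p - 1 + 1) := by ring_nf
    _ = x ^ (p - 1) * x := by rw [Real.rpow_add' hx (by linarith), Real.rpow_one]
    _ ≤ w ^ (p - 1) * x := by gcongr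

lemma rpow_mul_le_rpow_mul_rpow_of_le_mul {ν g p : ℝ} (hν : 0 ≤ ν) (hp : 1 ≤ p)
    (h : ν ≤ g * ν) : ν ^ p * g ≤ ν ^ p * g ^ p := by
  rcases hν.eq_or_lt with rfl | hν
  · simp [Real.zero_rpow (by linarith : p ≠ 0)]
  · have hg : 1 ≤ g := le_of_mul_le_mul_right (by linarith) hν
    exact mul_le_mul_of_nonneg_left (Real.self_le_rpow_of_one_le hg hp) (by positivity)

lemma sum_range_sub_two_le {f : ℕ → ℝ} {m M : ℝ} (hf : ∀ j, f j ∈ Icc m M) (n : ℕ) :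
    ∑ i ∈ Finset.range n, (f (i + 2) - f i) ≤ 2 * (M - m) := by
  have htel : ∑ i ∈ Finset.range n, (f (i + 2) - f i) = (f (n + 1) - f 1) + (f n - f 0) := by
    rw [← Finset.sum_range_sub (fun j => f (j + 1)), ← Finset.sum_range_sub f,
      ← Finset.sum_add_distrib]
    exact Finset.sum_congr rfl fun i _ => by ring
  linarith [htel, (hf (n + 1)).2, (hf 1).1, (hf n).2, (hf 0).1]

lemma tendsto_add_two_mul_pow_three_div_two_pow (n : ℝ) :
    Tendsto (fun N : ℕ => (n + 2 * N) ^ 3 / 2 ^ N) atTop (𝓝 0) := by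
  have h := fun j => tendsto_pow_const_div_const_pow_of_one_lt j one_lt_two
  convert ((((h 0).const_mul (n ^ 3)).add ((h 1).const_mul (6 * n ^ 2))).add
    ((h 2).const_mul (12 * n))).add ((h 3).const_mul 8) using 1
  · ext N; ring
  · simp

lemma eighteen_mul_inv_six_rpow_le {p : ℝ} (hp : 2 ≤ p) : 18 * (1 / 6 : ℝ) ^ p ≤ 1 / 2 := by
  have : (1 / 6 : ℝ) ^ p ≤ (1 / 6 : ℝ) ^ (2 : ℝ) :=
    Real.rpow_le_rpow_of_exponent_ge (by norm_num) (by norm_num) hp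
  rw [Real.rpow_two] at this
  linarith

section Grid

variable {τ : ℕ → ℝ} {k : ℕ} {x : ℝ}

/-- The index `i < k` of the last cell `[τ i, τ (i + 1)]` containing `x`. -/
noncomputable def gridIndex (τ : ℕ → ℝ) (k : ℕ) (x : ℝ) : ℕ :=
  Nat.findGreatest (fun i => τ i ≤ x) (k - 1)

lemma gridIndex_lt (hk : 0 < k) : gridIndex τ k x < k :=
  (Nat.findGreatest_le _).trans_lt (by omega)

lemma apply_gridIndex_le (hx : τ 0 ≤ x) : τ (gridIndex τ k x) ≤ x :=
  Nat.findGreatest_spec (P := fun i => τ i ≤ x) (Nat.zero_le _) hx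

lemma le_apply_gridIndex_succ (hk : 0 < k) (hx : x ≤ τ k) : x ≤ τ (gridIndex τ k x + 1) := by
  by_cases hlast : gridIndex τ k x + 1 ≤ k - 1
  · exact (not_le.1 (Nat.findGreatest_is_greatest (P := fun i => τ i ≤ x)
      (Nat.lt_succ_self _) hlast)).le
  · have : gridIndex τ k x + 1 = k := by have := gridIndex_lt (τ := τ) (x := x) hk; omega
    rwa [this]

lemma gridIndex_mono : Monotone (gridIndex τ k) :=
  fun _ _ hxy => Nat.findGreatest_mono (fun _ hi => hi.trans hxy) le_rfl

end Grid

lemma exists_grid {G : ℝ → ℝ} {A B : ℝ} (hGc : ContinuousOn G (Icc A B))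
    (hGm : StrictMonoOn G (Icc A B)) (hAB : A ≤ B) {k : ℕ} (hk : 0 < k) :
    ∃ τ : ℕ → ℝ, Monotone τ ∧ τ 0 = A ∧ τ k = B ∧ (∀ i, τ i ∈ Icc A B) ∧
      ∀ i < k, G (τ (i + 1)) - G (τ i) = (G B - G A) / k := by
  set d := (G B - G A) / k
  have hkd : k * d = G B - G A := mul_div_cancel₀ _ (Nat.cast_ne_zero.2 hk.ne')
  have hd : 0 ≤ d := div_nonneg (sub_nonneg.2 (hGm.monotoneOn ⟨le_rfl, hAB⟩ ⟨hAB, le_rfl⟩ hAB))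
    k.cast_nonneg
  have level : ∀ i : ℕ, ∃ x ∈ Icc A B, G x = G A + (min i k : ℕ) * d := by
    intro i
    refine intermediate_value_Icc hAB hGc ⟨le_add_of_nonneg_right (by positivity), ?_⟩
    have : ((min i k : ℕ) : ℝ) ≤ k := by exact_mod_cast min_le_right i k
    nlinarith
  choose τ hτ hGτ using level
  have hA : A ∈ Icc A B := ⟨le_rfl, hAB⟩
  have hB : B ∈ Icc A B := ⟨hAB, le_rfl⟩
  refine ⟨τ, monotone_nat_of_le_succ fun i => ?_, hGm.injOn (hτ 0) hA (by simp [hGτ]),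
    hGm.injOn (hτ k) hB (by simp [hGτ, hkd]), hτ, fun i hi => ?_⟩
  · rw [← hGm.le_iff_le (hτ i) (hτ (i + 1)), hGτ, hGτ]
    gcongr
    omega
  · rw [hGτ, hGτ, min_eq_left hi, min_eq_left hi.le]
    push_cast
    ring

section Covering

variable {Ω : Type*} {ξ : ℝ → Ω → ℝ}

def exceedEvent (ξ : ℝ → Ω → ℝ) (S : Finset ℝ) (l : ℝ) : Set Ω :=
  {ω | ∃ x ∈ S, ∃ y ∈ S, ∃ z ∈ S, x ≤ y ∧ y ≤ z ∧ l < procDelta ξ x y z ω}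

lemma exceedEvent_mono {S T : Finset ℝ} (hST : S ⊆ T) (l : ℝ) :
    exceedEvent ξ S l ⊆ exceedEvent ξ T l := by
  rintro ω ⟨x, hx, y, hy, z, hz, hδ⟩
  exact ⟨x, hST hx, y, hST hy, z, hST hz, hδ⟩

lemma procDelta_le_of_notMem_exceedEvent {S : Finset ℝ} {l x y z : ℝ} {ω : Ω}
    (hω : ω ∉ exceedEvent ξ S l) (hx : x ∈ S) (hy : y ∈ S) (hz : z ∈ S) (hxy : x ≤ y)
    (hyz : y ≤ z) : procDelta ξ x y z ω ≤ l :=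
  not_lt.1 fun hδ => hω ⟨x, hx, y, hy, z, hz, hxy, hyz, hδ⟩

noncomputable def childSet (S : Finset ℝ) (τ : ℕ → ℝ) (i : ℕ) : Finset ℝ :=
  insert (τ i) (insert (τ (i + 1)) (S.filter (· ∈ Icc (τ i) (τ (i + 1)))))

noncomputable def gridSet (τ : ℕ → ℝ) (k : ℕ) : Finset ℝ :=
  (Finset.range (k + 1)).image τ

lemma card_childSet_le (S : Finset ℝ) (τ : ℕ → ℝ) (i : ℕ) :
    (childSet S τ i).card ≤ S.card + 2 := by
  unfold childSet
  exact (Finset.card_insert_le _ _).trans (Nat.succ_le_succ ((Finset.card_insert_le _ _).trans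
    (Nat.succ_le_succ (Finset.card_filter_le _ _))))

lemma mem_childSet {S : Finset ℝ} {τ : ℕ → ℝ} {i : ℕ} {w : ℝ} (hw : w ∈ S)
    (hw₁ : τ i ≤ w) (hw₂ : w ≤ τ (i + 1)) : w ∈ childSet S τ i := by
  simp [childSet, hw, hw₁, hw₂]

lemma left_mem_childSet (S : Finset ℝ) (τ : ℕ → ℝ) (i : ℕ) : τ i ∈ childSet S τ i := by
  simp [childSet]

lemma right_mem_childSet (S : Finset ℝ) (τ : ℕ → ℝ) (i : ℕ) : τ (i + 1) ∈ childSet S τ i := by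
  simp [childSet]

lemma subset_Icc_of_childSet {S : Finset ℝ} {τ : ℕ → ℝ} (hτ : Monotone τ) (i : ℕ) :
    ∀ w ∈ childSet S τ i, w ∈ Icc (τ i) (τ (i + 1)) := by
  have := hτ (Nat.le_succ i)
  simp only [childSet, Finset.mem_insert, Finset.mem_filter]
  rintro w (rfl | rfl | ⟨-, hw⟩)
  exacts [⟨le_rfl, this⟩, ⟨this, le_rfl⟩, hw]

lemma gridSet_subset_Icc {τ : ℕ → ℝ} {A B : ℝ} (hτ : ∀ i, τ i ∈ Icc A B) (k : ℕ) :
    ∀ w ∈ gridSet τ k, w ∈ Icc A B := by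
  simp only [gridSet, Finset.mem_image]
  rintro _ ⟨i, -, rfl⟩
  exact hτ i

variable {τ : ℕ → ℝ} {k : ℕ} {S : Finset ℝ} {a : ℝ} {ω : Ω}

lemma exists_near_gridIndex (hk : 0 < k)
    (hchild : ∀ i < k, ω ∉ exceedEvent ξ (childSet S τ i) a) {w : ℝ} (hw : w ∈ S)
    (hw₀ : τ 0 ≤ w) (hwk : w ≤ τ k) :
    ∃ j, (j = gridIndex τ k w ∨ j = gridIndex τ k w + 1) ∧ |ξ w ω - ξ (τ j) ω| ≤ a := by
  set i := gridIndex τ k w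
  have h₁ := apply_gridIndex_le (k := k) hw₀
  have h₂ := le_apply_gridIndex_succ hk hwk
  have := procDelta_le_of_notMem_exceedEvent (hchild i (gridIndex_lt hk))
    (left_mem_childSet S τ i) (mem_childSet hw h₁ h₂) (right_mem_childSet S τ i) h₁ h₂
  rcases min_le_iff.1 this with h | h
  · exact ⟨i, .inl rfl, h⟩
  · exact ⟨i + 1, .inr rfl, by rwa [abs_sub_comm]⟩

/-- When `y` shares its cell with `x` (resp. `z`), the cell bound on `(x, y, τ (i + 1))`
(resp. `(τ i, y, z)`) and `δ(x,y,z) > a` decide which endpoint `y` is close to. -/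
lemma exists_near_gridIndex_between (hk : 0 < k)
    (hchild : ∀ i < k, ω ∉ exceedEvent ξ (childSet S τ i) a)
    (hS : ∀ w ∈ S, w ∈ Icc (τ 0) (τ k)) {x y z : ℝ} (hx : x ∈ S) (hy : y ∈ S) (hz : z ∈ S)
    (hxy : x ≤ y) (hyz : y ≤ z) (hδ : a < procDelta ξ x y z ω) :
    ∃ j, gridIndex τ k x + 1 ≤ j ∧ j ≤ gridIndex τ k z ∧ |ξ y ω - ξ (τ j) ω| ≤ a := by
  have hcell : ∀ w ∈ S, τ (gridIndex τ k w) ≤ w ∧ w ≤ τ (gridIndex τ k w + 1) :=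
    fun w hw => ⟨apply_gridIndex_le (hS w hw).1, le_apply_gridIndex_succ hk (hS w hw).2⟩
  obtain ⟨hx₁, hx₂⟩ := hcell x hx
  obtain ⟨hy₁, hy₂⟩ := hcell y hy
  obtain ⟨hz₁, hz₂⟩ := hcell z hz
  have hyk := gridIndex_lt (τ := τ) (x := y) hk
  have hδxy : a < |ξ y ω - ξ x ω| := hδ.trans_le (min_le_left _ _)
  have hδyz : a < |ξ z ω - ξ y ω| := hδ.trans_le (min_le_right _ _)
  rcases (gridIndex_mono (τ := τ) (k := k) hxy).eq_or_lt with hixy | hixy <;>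
    rcases (gridIndex_mono (τ := τ) (k := k) hyz).eq_or_lt with hiyz | hiyz
  · rw [← hixy] at hy₁ hy₂; rw [← hiyz, ← hixy] at hz₁ hz₂
    exact absurd hδ (not_lt.2 (procDelta_le_of_notMem_exceedEvent
      (hchild _ (gridIndex_lt hk)) (mem_childSet hx hx₁ hx₂) (mem_childSet hy hy₁ hy₂)
      (mem_childSet hz hz₁ hz₂) hxy hyz))
  · rw [hixy] at hx₁ hx₂
    have := procDelta_le_of_notMem_exceedEvent (hchild _ hyk) (mem_childSet hx hx₁ hx₂)
      (mem_childSet hy hy₁ hy₂) (right_mem_childSet S τ _) hxy hy₂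
    refine ⟨gridIndex τ k y + 1, by omega, by omega, ?_⟩
    rw [abs_sub_comm]
    exact (min_le_iff.1 this).resolve_left (not_le.2 hδxy)
  · rw [hiyz] at hy₁ hy₂
    have := procDelta_le_of_notMem_exceedEvent (hchild _ (gridIndex_lt hk))
      (left_mem_childSet S τ _) (mem_childSet hy hy₁ hy₂) (mem_childSet hz hz₁ hz₂) hy₁ hyz
    exact ⟨gridIndex τ k z, by omega, le_rfl, (min_le_iff.1 this).resolve_right (not_le.2 hδyz)⟩
  · obtain ⟨j, hj, hyj⟩ := exists_near_gridIndex hk hchild hy (hS y hy).1 (hS y hy).2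
    exact ⟨j, by omega, by omega, hyj⟩

lemma exceedEvent_subset_childSet_union_gridSet (hτ : Monotone τ) (hk : 0 < k)
    (hS : ∀ w ∈ S, w ∈ Icc (τ 0) (τ k)) (ha : 0 ≤ a) {c : ℝ} (hc : 0 ≤ c) :
    exceedEvent ξ S (2 * a + c) ⊆
      (⋃ i ∈ Finset.range k, exceedEvent ξ (childSet S τ i) a) ∪ exceedEvent ξ (gridSet τ k) c := by
  rintro ω ⟨x, hx, y, hy, z, hz, hxy, hyz, hδ⟩
  by_contra hω
  simp only [mem_union, mem_iUnion, Finset.mem_range, not_or, not_exists] at hω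
  obtain ⟨hchild, hgrid⟩ := hω
  have hchild : ∀ i < k, ω ∉ exceedEvent ξ (childSet S τ i) a := fun i hi h => hchild i hi h
  obtain ⟨j₁, hj₁, hxj⟩ := exists_near_gridIndex hk hchild hx (hS x hx).1 (hS x hx).2
  obtain ⟨j₂, hj₂x, hj₂z, hyj⟩ := exists_near_gridIndex_between hk hchild hS hx hy hz hxy hyz
    (by linarith)
  obtain ⟨j₃, hj₃, hzj⟩ := exists_near_gridIndex hk hchild hz (hS z hz).1 (hS z hz).2
  have hzk := gridIndex_lt (τ := τ) (x := z) hk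
  have hmem : ∀ j ≤ k, τ j ∈ gridSet τ k := fun j hj =>
    Finset.mem_image_of_mem τ (Finset.mem_range.2 (Nat.lt_succ_of_le hj))
  have hgrid := procDelta_le_of_notMem_exceedEvent hgrid (hmem j₁ (by omega))
    (hmem j₂ (by omega)) (hmem j₃ (by omega)) (hτ (by omega)) (hτ (by omega))
  exact absurd hδ (not_lt.2 (min_abs_sub_le_of_abs_sub_le hxj hyj hzj hgrid))

end Covering

def windowEvent {Ω : Type*} (ξ : ℝ → Ω → ℝ) (A B u : ℝ) : Set Ω :=
  {ω | ∃ q₁ q₂ q₃ : ℚ, A ≤ q₁ ∧ (q₁ : ℝ) ≤ q₂ ∧ (q₂ : ℝ) ≤ q₃ ∧ (q₃ : ℝ) ≤ B ∧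
    u < procDelta ξ q₁ q₂ q₃ ω}

lemma windowEvent_subset_iUnion_exceedEvent {Ω : Type*} (ξ : ℝ → Ω → ℝ) (A B u : ℝ) :
    windowEvent ξ A B u ⊆
      ⋃ T : Finset ℚ, exceedEvent ξ ((T.image ((↑) : ℚ → ℝ)).filter (· ∈ Icc A B)) u := by
  rintro ω ⟨q₁, q₂, q₃, h₁, h₂, h₃, h₄, hδ⟩
  refine mem_iUnion.2 ⟨{q₁, q₂, q₃}, q₁, ?_, q₂, ?_, q₃, ?_, h₂, h₃, hδ⟩ <;>
    simp only [Finset.mem_filter, Finset.mem_image, Finset.mem_insert, Finset.mem_singleton,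
      mem_Icc] <;>
    refine ⟨⟨_, by simp, rfl⟩, ?_, ?_⟩ <;> linarith

lemma kappaGt_subset_iUnion_windowEvent {Ω : Type*} (ξ : ℝ → Ω → ℝ) {h : ℝ} (hh : 0 < h)
    (u : ℝ) : KappaGt ξ h u ⊆ ⋃ i ∈ Finset.range (⌊1 / h⌋₊ + 1),
      windowEvent ξ (min (i * h) 1) (min ((i + 2 : ℕ) * h) 1) u := by
  rintro ω ⟨t₁, t, t₂, h₀, h₁, h₂, h₃, h₄, hδ⟩
  have ht₁ : (t₁ : ℝ) ≤ 1 := h₁.trans (h₂.trans h₄)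
  have hi : ⌊(t₁ : ℝ) / h⌋₊ * h ≤ t₁ := (le_div_iff₀ hh).1 (Nat.floor_le (by positivity))
  have hi' : (t₁ : ℝ) < (⌊(t₁ : ℝ) / h⌋₊ + 1) * h := (div_lt_iff₀ hh).1 (Nat.lt_floor_add_one _)
  refine mem_biUnion (x := ⌊(t₁ : ℝ) / h⌋₊) (Finset.mem_range.2 (Nat.lt_succ_of_le
    (Nat.floor_le_floor (div_le_div_of_nonneg_right ht₁ hh.le)))) ?_
  exact ⟨t₁, t, t₂, (min_le_left _ _).trans hi, h₁, h₂, le_min (by push_cast; linarith) h₄, hδ⟩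

lemma sub_nonneg_of_monotoneOn {G : ℝ → ℝ} (hG : MonotoneOn G (Icc 0 1)) {A B : ℝ}
    (hA : 0 ≤ A) (hAB : A ≤ B) (hB : B ≤ 1) : 0 ≤ G B - G A :=
  sub_nonneg.2 (hG ⟨hA, hAB.trans hB⟩ ⟨hA.trans hAB, hB⟩ hAB)

section ContModulus

variable {G : ℝ → ℝ} {h : ℝ}

lemma abs_sub_le_contModulus (hG : MonotoneOn G (Icc 0 1)) {r t : ℝ} (hr : r ∈ Icc (0 : ℝ) 1)
    (ht : t ∈ Icc (0 : ℝ) 1) (hrt : |r - t| ≤ h) : |G t - G r| ≤ contModulus G h := by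
  refine le_csSup ⟨G 1 - G 0, ?_⟩ ⟨r, t, hr, ht, hrt, rfl⟩
  rintro _ ⟨r, t, hr, ht, -, rfl⟩
  have h0 : ∀ x ∈ Icc (0 : ℝ) 1, G 0 ≤ G x ∧ G x ≤ G 1 := fun x hx =>
    ⟨hG ⟨le_rfl, zero_le_one⟩ hx hx.1, hG hx ⟨zero_le_one, le_rfl⟩ hx.2⟩
  rw [abs_le]
  constructor <;> linarith [h0 r hr, h0 t ht]

lemma contModulus_nonneg (hG : MonotoneOn G (Icc 0 1)) (hh : 0 ≤ h) : 0 ≤ contModulus G h := by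
  simpa using abs_sub_le_contModulus hG (r := 0) (t := 0) ⟨le_rfl, zero_le_one⟩
    ⟨le_rfl, zero_le_one⟩ (by simpa using hh)

lemma contModulus_le {c : ℝ} (hh : 0 ≤ h)
    (hc : ∀ r ∈ Icc (0 : ℝ) 1, ∀ t ∈ Icc (0 : ℝ) 1, |r - t| ≤ h → |G t - G r| ≤ c) :
    contModulus G h ≤ c :=
  csSup_le ⟨0, 0, 0, ⟨le_rfl, zero_le_one⟩, ⟨le_rfl, zero_le_one⟩, by simpa using hh, by simp⟩
    (by rintro _ ⟨r, t, hr, ht, hrt, rfl⟩; exact hc r hr t ht hrt)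

lemma tendsto_contModulus_two_mul (hGc : ContinuousOn G (Icc 0 1))
    (hG : MonotoneOn G (Icc 0 1)) :
    Tendsto (fun h => contModulus G (2 * h)) (𝓝[>] 0) (𝓝 0) := by
  refine tendsto_order.2 ⟨fun a ha => eventually_nhdsWithin_of_forall fun h hh =>
    ha.trans_le (contModulus_nonneg hG (by linarith [mem_Ioi.1 hh])), fun ε hε => ?_⟩
  obtain ⟨d, hd, hGd⟩ := Metric.uniformContinuousOn_iff.1
    (isCompact_Icc.uniformContinuousOn_of_continuous hGc) (ε / 2) (half_pos hε)
  filter_upwards [Ioo_mem_nhdsGT (half_pos hd)] with h hh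
  refine (contModulus_le (by linarith [hh.1]) fun r hr t ht hrt => ?_).trans_lt (half_lt_self hε)
  refine (hGd t ht r hr ?_).le
  rw [Real.dist_eq, abs_sub_comm]
  linarith [hh.2]

end ContModulus

section Moments

variable {Ω : Type*} [MeasurableSpace Ω] {P : Measure Ω} {ξ : ℝ → Ω → ℝ}

lemma measurable_procDelta (hξ : ∀ t, Measurable (ξ t)) (r s t : ℝ) :
    Measurable (procDelta ξ r s t) :=
  ((hξ s).sub (hξ r)).abs.min ((hξ t).sub (hξ s)).abs

lemma measure_lt_procDelta_le (hξ : ∀ t, Measurable (ξ t)) {p r s t c l : ℝ} (hp : 0 < p)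
    (hc : 0 ≤ c) (hl : 0 < l) (hmom : tripleMoment P ξ p r s t ≤ ENNReal.ofReal c) :
    P {ω | l < procDelta ξ r s t ω} ≤ ENNReal.ofReal ((c / l) ^ p) := by
  have hint : ∫⁻ ω, ENNReal.ofReal (procDelta ξ r s t ω ^ p) ∂P ≤ ENNReal.ofReal (c ^ p) :=
    calc ∫⁻ ω, ENNReal.ofReal (procDelta ξ r s t ω ^ p) ∂P = tripleMoment P ξ p r s t ^ p := by
          rw [tripleMoment, ← ENNReal.rpow_mul, one_div_mul_cancel hp.ne', ENNReal.rpow_one]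
      _ ≤ ENNReal.ofReal c ^ p := ENNReal.rpow_le_rpow hmom hp.le
      _ = ENNReal.ofReal (c ^ p) := ENNReal.ofReal_rpow_of_nonneg hc hp.le
  have hlp : 0 < l ^ p := Real.rpow_pos_of_pos hl p
  calc P {ω | l < procDelta ξ r s t ω}
      ≤ P {ω | ENNReal.ofReal (l ^ p) ≤ ENNReal.ofReal (procDelta ξ r s t ω ^ p)} :=
        measure_mono fun ω hω =>
          ENNReal.ofReal_le_ofReal (Real.rpow_le_rpow hl.le (le_of_lt hω) hp.le)
    _ ≤ (∫⁻ ω, ENNReal.ofReal (procDelta ξ r s t ω ^ p) ∂P) / ENNReal.ofReal (l ^ p) :=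
        meas_ge_le_lintegral_div
          ((measurable_procDelta hξ r s t).pow_const p).ennreal_ofReal.aemeasurable
          (ENNReal.ofReal_pos.2 hlp).ne' ENNReal.ofReal_ne_top
    _ ≤ ENNReal.ofReal (c ^ p) / ENNReal.ofReal (l ^ p) := by gcongr
    _ = ENNReal.ofReal ((c / l) ^ p) := by
        rw [Real.div_rpow hc hl.le, ENNReal.ofReal_div_of_pos hlp]

lemma measure_exceedEvent_le_card_pow_mul {S : Finset ℝ} {l : ℝ} {β : ℝ≥0∞}
    (hβ : ∀ x ∈ S, ∀ y ∈ S, ∀ z ∈ S, x ≤ y → y ≤ z → P {ω | l < procDelta ξ x y z ω} ≤ β) :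
    P (exceedEvent ξ S l) ≤ S.card ^ 3 * β := by
  set T := (S ×ˢ S ×ˢ S).filter fun q => q.1 ≤ q.2.1 ∧ q.2.1 ≤ q.2.2
  have hT : T.card ≤ S.card ^ 3 := by
    refine (Finset.card_filter_le _ _).trans_eq ?_
    simp only [Finset.card_product]
    ring
  calc P (exceedEvent ξ S l) ≤ P (⋃ q ∈ T, {ω | l < procDelta ξ q.1 q.2.1 q.2.2 ω}) := by
        refine measure_mono ?_
        rintro ω ⟨x, hx, y, hy, z, hz, hxy, hyz, hδ⟩
        exact mem_biUnion (x := (x, y, z)) (Finset.mem_filter.2 ⟨Finset.mem_product.2 ⟨hx,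
          Finset.mem_product.2 ⟨hy, hz⟩⟩, hxy, hyz⟩) hδ
    _ ≤ ∑ q ∈ T, P {ω | l < procDelta ξ q.1 q.2.1 q.2.2 ω} := measure_biUnion_finset_le _ _
    _ ≤ ∑ _q ∈ T, β := by
        refine Finset.sum_le_sum fun q hq => ?_
        obtain ⟨hq, hq₁, hq₂⟩ := Finset.mem_filter.1 hq
        simp only [Finset.mem_product] at hq
        exact hβ _ hq.1 _ hq.2.1 _ hq.2.2 hq₁ hq₂
    _ ≤ S.card ^ 3 * β := by
        rw [Finset.sum_const, nsmul_eq_mul]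
        gcongr
        exact_mod_cast hT

end Moments

/-- The moment hypothesis at one exponent `p`, with the real number `ν` in place of `ν(p)`. -/
structure TripleMomentBound {Ω : Type*} [MeasurableSpace Ω] (P : Measure Ω) (ξ : ℝ → Ω → ℝ)
    (G : ℝ → ℝ) (p ν : ℝ) : Prop where
  measurable : ∀ t, Measurable (ξ t)
  nonneg : 0 ≤ ν
  le : ∀ r s t, 0 ≤ r → r ≤ s → s ≤ t → t ≤ 1 →
    tripleMoment P ξ p r s t ≤ ENNReal.ofReal ((G t - G r) * ν)

section Normalization

variable {Ω : Type*} [MeasurableSpace Ω] {P : Measure Ω} {ξ : ℝ → Ω → ℝ} {G : ℝ → ℝ} {p : ℝ}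

lemma tripleMomentBound_toReal_nuFun (hξ : ∀ t, Measurable (ξ t)) (hnu : nuFun P ξ p ≠ ⊤)
    (hmom : ∀ r s t : ℝ, 0 ≤ r → r ≤ s → s ≤ t → t ≤ 1 →
      tripleMoment P ξ p r s t ≤ ENNReal.ofReal (G t - G r) * nuFun P ξ p) :
    TripleMomentBound P ξ G p (nuFun P ξ p).toReal where
  measurable := hξ
  nonneg := ENNReal.toReal_nonneg
  le r s t hr hrs hst ht := by
    rw [ENNReal.ofReal_mul' ENNReal.toReal_nonneg, ENNReal.ofReal_toReal hnu]
    exact hmom r s t hr hrs hst ht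

lemma toReal_nuFun_le_mul (hG : MonotoneOn G (Icc 0 1)) (hnu : nuFun P ξ p ≠ ⊤)
    (hmom : ∀ r s t : ℝ, 0 ≤ r → r ≤ s → s ≤ t → t ≤ 1 →
      tripleMoment P ξ p r s t ≤ ENNReal.ofReal (G t - G r) * nuFun P ξ p) :
    (nuFun P ξ p).toReal ≤ (G 1 - G 0) * (nuFun P ξ p).toReal := by
  have h01 := sub_nonneg_of_monotoneOn hG le_rfl zero_le_one le_rfl
  refine ENNReal.toReal_le_of_le_ofReal (mul_nonneg h01 ENNReal.toReal_nonneg) ?_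
  rw [ENNReal.ofReal_mul h01, ENNReal.ofReal_toReal hnu]
  refine iSup₂_le fun r s => iSup₂_le fun t ⟨hr, hrs, hst, ht⟩ =>
    (hmom r s t hr hrs hst ht).trans ?_
  have hr1 : r ∈ Icc (0 : ℝ) 1 := ⟨hr, hrs.trans (hst.trans ht)⟩
  have ht1 : t ∈ Icc (0 : ℝ) 1 := ⟨hr.trans (hrs.trans hst), ht⟩
  gcongr <;> linarith [hG ⟨le_rfl, zero_le_one⟩ hr1 hr, hG ht1 ⟨zero_le_one, le_rfl⟩ ht]

end Normalization

namespace TripleMomentBound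

variable {Ω : Type*} [MeasurableSpace Ω] {P : Measure Ω} {ξ : ℝ → Ω → ℝ} {G : ℝ → ℝ}
  {p ν : ℝ} {A B l u : ℝ} {S : Finset ℝ}

lemma measure_exceedEvent_le_card (hM : TripleMomentBound P ξ G p ν)
    (hG : MonotoneOn G (Icc 0 1)) (hp : 0 < p) (hA : 0 ≤ A) (hB : B ≤ 1)
    (hS : ∀ x ∈ S, x ∈ Icc A B) (hl : 0 < l) :
    P (exceedEvent ξ S l) ≤ ENNReal.ofReal (S.card ^ 3 * ((G B - G A) * ν / l) ^ p) := by
  rw [ENNReal.ofReal_mul (by positivity), ENNReal.ofReal_pow (Nat.cast_nonneg _),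
    ENNReal.ofReal_natCast]
  refine measure_exceedEvent_le_card_pow_mul fun x hx y hy z hz hxy hyz => ?_
  have hAB : A ≤ B := (hS x hx).1.trans (hS x hx).2
  have hmem : ∀ w ∈ Icc A B, w ∈ Icc (0 : ℝ) 1 := fun w hw => ⟨hA.trans hw.1, hw.2.trans hB⟩
  have hGxz : G z - G x ≤ G B - G A := by
    have := hG (hmem _ ⟨le_rfl, hAB⟩) (hmem x (hS x hx)) (hS x hx).1
    have := hG (hmem z (hS z hz)) (hmem _ ⟨hAB, le_rfl⟩) (hS z hz).2
    linarith
  refine measure_lt_procDelta_le hM.measurable hp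
    (mul_nonneg (sub_nonneg_of_monotoneOn hG hA hAB hB) hM.nonneg)
    hl ((hM.le x y z (hmem x (hS x hx)).1 hxy hyz (hmem z (hS z hz)).2).trans ?_)
  exact ENNReal.ofReal_le_ofReal (mul_le_mul_of_nonneg_right hGxz hM.nonneg)

lemma measure_exceedEvent_gridSet_le (hM : TripleMomentBound P ξ G p ν)
    (hG : MonotoneOn G (Icc 0 1)) (hp : 0 < p) {τ : ℕ → ℝ} (hτ : ∀ i, τ i ∈ Icc A B) (k : ℕ)
    (hA : 0 ≤ A) (hB : B ≤ 1) (hl : 0 < l) :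
    P (exceedEvent ξ (gridSet τ k) (l / 3)) ≤
      ENNReal.ofReal ((k + 1) ^ 3 * 3 ^ p * ((G B - G A) * ν / l) ^ p) := by
  have hGAB := sub_nonneg_of_monotoneOn hG hA ((hτ 0).1.trans (hτ 0).2) hB
  have hν := hM.nonneg
  refine (hM.measure_exceedEvent_le_card hG hp hA hB (gridSet_subset_Icc hτ k)
    (by linarith)).trans (ENNReal.ofReal_le_ofReal ?_)
  have hcard : ((gridSet τ k).card : ℝ) ≤ k + 1 := by
    exact_mod_cast (Finset.card_image_le).trans (Finset.card_range (k + 1)).le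
  rw [show (G B - G A) * ν / (l / 3) = 3 * ((G B - G A) * ν / l) by field_simp,
    Real.mul_rpow (by norm_num) (by positivity), ← mul_assoc]
  exact mul_le_mul_of_nonneg_right (mul_le_mul_of_nonneg_right
    (pow_le_pow_left₀ (Nat.cast_nonneg _) hcard 3) (by positivity)) (by positivity)

lemma measure_exceedEvent_le_of_cells (hM : TripleMomentBound P ξ G p ν)
    (hGc : ContinuousOn G (Icc 0 1)) (hGm : StrictMonoOn G (Icc 0 1)) (hp : 0 < p) {C : ℝ}
    (hC : 0 ≤ C) (hcell : ∀ {A' B' l' : ℝ} {S' : Finset ℝ}, 0 ≤ A' → A' ≤ B' → B' ≤ 1 →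
      (∀ x ∈ S', x ∈ Icc A' B') → S'.card ≤ S.card + 2 → 0 < l' →
        P (exceedEvent ξ S' l') ≤ ENNReal.ofReal (C * ((G B' - G A') * ν / l') ^ p))
    (hA : 0 ≤ A) (hAB : A ≤ B) (hB : B ≤ 1) (hS : ∀ x ∈ S, x ∈ Icc A B) (hl : 0 < l) :
    P (exceedEvent ξ S l) ≤ ENNReal.ofReal
      ((19 ^ 3 * 3 ^ p + 18 * (1 / 6) ^ p * C) * ((G B - G A) * ν / l) ^ p) := by
  have hsub : Icc A B ⊆ Icc 0 1 := Icc_subset_Icc hA hB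
  obtain ⟨τ, hτ, hτ₀, hτk, hτAB, hτG⟩ :=
    exists_grid (hGc.mono hsub) (hGm.mono hsub) hAB (k := 18) (by norm_num)
  have hGAB := sub_nonneg_of_monotoneOn hGm.monotoneOn hA hAB hB
  have hν := hM.nonneg
  set X := ((G B - G A) * ν / l) ^ p
  have hchild : ∀ i ∈ Finset.range 18, P (exceedEvent ξ (childSet S τ i) (l / 3)) ≤
      ENNReal.ofReal ((1 / 6) ^ p * C * X) := by
    intro i hi
    refine (hcell (hA.trans (hτAB i).1) (hτ (Nat.le_succ i)) ((hτAB (i + 1)).2.trans hB)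
      (subset_Icc_of_childSet hτ i) (card_childSet_le S τ i) (by linarith)).trans_eq ?_
    have hratio : (G B - G A) / 18 * ν / (l / 3) = 1 / 6 * ((G B - G A) * ν / l) := by
      field_simp
      ring
    rw [hτG i (Finset.mem_range.1 hi), Nat.cast_ofNat, hratio,
      Real.mul_rpow (by norm_num) (by positivity)]
    simp only [X]
    congr 1
    ring
  have hgrid := hM.measure_exceedEvent_gridSet_le hGm.monotoneOn hp hτAB 18 hA hB hl
  rw [show ((18 : ℕ) : ℝ) + 1 = 19 by norm_num] at hgrid
  have hSτ : ∀ w ∈ S, w ∈ Icc (τ 0) (τ 18) := by rwa [hτ₀, hτk]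
  have hcover := exceedEvent_subset_childSet_union_gridSet (ξ := ξ) (k := 18) hτ
    (by norm_num) hSτ (by linarith : 0 ≤ l / 3) (by linarith : 0 ≤ l / 3)
  rw [show 2 * (l / 3) + l / 3 = l by ring] at hcover
  calc P (exceedEvent ξ S l)
      ≤ ∑ i ∈ Finset.range 18, P (exceedEvent ξ (childSet S τ i) (l / 3)) +
          P (exceedEvent ξ (gridSet τ 18) (l / 3)) :=
        (measure_mono hcover).trans ((measure_union_le _ _).trans
          (add_le_add_left (measure_biUnion_finset_le _ _) _))
    _ ≤ ∑ _i ∈ Finset.range 18, ENNReal.ofReal ((1 / 6) ^ p * C * X) +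
          ENNReal.ofReal (19 ^ 3 * 3 ^ p * X) := add_le_add (Finset.sum_le_sum hchild) hgrid
    _ = _ := by
        rw [Finset.sum_const, Finset.card_range, ← ENNReal.ofReal_nsmul, nsmul_eq_mul,
          Nat.cast_ofNat, ← ENNReal.ofReal_add (by positivity) (by positivity)]
        congr 1
        ring

lemma measure_exceedEvent_le_of_depth (hM : TripleMomentBound P ξ G p ν)
    (hGc : ContinuousOn G (Icc 0 1)) (hGm : StrictMonoOn G (Icc 0 1)) (hp : 2 ≤ p) (N : ℕ)
    (hA : 0 ≤ A) (hAB : A ≤ B) (hB : B ≤ 1) (hS : ∀ x ∈ S, x ∈ Icc A B) (hl : 0 < l) :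
    P (exceedEvent ξ S l) ≤ ENNReal.ofReal
      ((2 * 19 ^ 3 * 3 ^ p + (S.card + 2 * N) ^ 3 / 2 ^ N) * ((G B - G A) * ν / l) ^ p) := by
  have hν := hM.nonneg
  induction N generalizing A B S l with
  | zero =>
    have hGAB := sub_nonneg_of_monotoneOn hGm.monotoneOn hA hAB hB
    refine (hM.measure_exceedEvent_le_card hGm.monotoneOn (by linarith) hA hB hS hl).trans
      (ENNReal.ofReal_le_ofReal (mul_le_mul_of_nonneg_right ?_ (by positivity)))
    simp only [CharP.cast_eq_zero, mul_zero, add_zero, pow_zero, div_one]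
    linarith [show (0 : ℝ) ≤ 2 * 19 ^ 3 * 3 ^ p by positivity]
  | succ N ih =>
    set R : ℝ := (S.card + 2 + 2 * N) ^ 3 / 2 ^ N
    have hcell {A' B' l' : ℝ} {S' : Finset ℝ} (hA' : 0 ≤ A') (hAB' : A' ≤ B') (hB' : B' ≤ 1)
        (hS' : ∀ x ∈ S', x ∈ Icc A' B') (hcard : S'.card ≤ S.card + 2) (hl' : 0 < l') :
        P (exceedEvent ξ S' l') ≤
          ENNReal.ofReal ((2 * 19 ^ 3 * 3 ^ p + R) * ((G B' - G A') * ν / l') ^ p) := by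
      have hGAB := sub_nonneg_of_monotoneOn hGm.monotoneOn hA' hAB' hB'
      refine (ih hA' hAB' hB' hS' hl').trans (ENNReal.ofReal_le_ofReal
        (mul_le_mul_of_nonneg_right ?_ (by positivity)))
      have : (S'.card : ℝ) ≤ S.card + 2 := by exact_mod_cast hcard
      simp only [R]
      gcongr
    have hGAB := sub_nonneg_of_monotoneOn hGm.monotoneOn hA hAB hB
    refine (hM.measure_exceedEvent_le_of_cells hGc hGm (by linarith) (by positivity) hcell
      hA hAB hB hS hl).trans (ENNReal.ofReal_le_ofReal
        (mul_le_mul_of_nonneg_right ?_ (by positivity)))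
    have h18 := eighteen_mul_inv_six_rpow_le hp
    have hR : (S.card + 2 * ↑(N + 1)) ^ 3 / 2 ^ (N + 1) = R / 2 := by
      simp only [R]; push_cast; ring
    rw [hR]
    nlinarith [show 0 ≤ 2 * 19 ^ 3 * 3 ^ p + R by positivity]

lemma measure_exceedEvent_le (hM : TripleMomentBound P ξ G p ν)
    (hGc : ContinuousOn G (Icc 0 1)) (hGm : StrictMonoOn G (Icc 0 1)) (hp : 2 ≤ p)
    (hA : 0 ≤ A) (hAB : A ≤ B) (hB : B ≤ 1) (hS : ∀ x ∈ S, x ∈ Icc A B) (hl : 0 < l) :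
    P (exceedEvent ξ S l) ≤ ENNReal.ofReal (2 * 19 ^ 3 * 3 ^ p * ((G B - G A) * ν / l) ^ p) := by
  have hlim := ((tendsto_add_two_mul_pow_three_div_two_pow S.card).const_add
    (2 * 19 ^ 3 * 3 ^ p)).mul_const (((G B - G A) * ν / l) ^ p)
  rw [add_zero] at hlim
  exact ge_of_tendsto' (ENNReal.tendsto_ofReal hlim)
    fun N => hM.measure_exceedEvent_le_of_depth hGc hGm hp N hA hAB hB hS hl

lemma measure_windowEvent_le (hM : TripleMomentBound P ξ G p ν)
    (hGc : ContinuousOn G (Icc 0 1)) (hGm : StrictMonoOn G (Icc 0 1)) (hp : 2 ≤ p)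
    (hA : 0 ≤ A) (hAB : A ≤ B) (hB : B ≤ 1) (hu : 0 < u) :
    P (windowEvent ξ A B u) ≤
      ENNReal.ofReal (2 * 19 ^ 3 * 3 ^ p * ((G B - G A) * ν / u) ^ p) := by
  have hmono : Monotone fun T : Finset ℚ =>
      exceedEvent ξ ((T.image ((↑) : ℚ → ℝ)).filter (· ∈ Icc A B)) u :=
    fun T T' hT => exceedEvent_mono (Finset.filter_subset_filter _ (Finset.image_subset_image hT)) u
  calc P (windowEvent ξ A B u)
      ≤ P (⋃ T : Finset ℚ, exceedEvent ξ ((T.image ((↑) : ℚ → ℝ)).filter (· ∈ Icc A B)) u) :=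
        measure_mono (windowEvent_subset_iUnion_exceedEvent ξ A B u)
    _ = ⨆ T : Finset ℚ, P (exceedEvent ξ ((T.image ((↑) : ℚ → ℝ)).filter (· ∈ Icc A B)) u) :=
        hmono.measure_iUnion
    _ ≤ _ := iSup_le fun T => hM.measure_exceedEvent_le hGc hGm hp hA hAB hB
        (fun x hx => (Finset.mem_filter.1 hx).2) hu

lemma measure_windowEvent_le_mul (hM : TripleMomentBound P ξ G p ν)
    (hGc : ContinuousOn G (Icc 0 1)) (hGm : StrictMonoOn G (Icc 0 1)) (hp : 2 ≤ p)
    (hA : 0 ≤ A) (hAB : A ≤ B) (hB : B ≤ 1) (hu : 0 < u) {w : ℝ} (hw : G B - G A ≤ w) :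
    P (windowEvent ξ A B u) ≤ ENNReal.ofReal
      (2 * 19 ^ 3 * 3 ^ p * u ^ (-p) * ν ^ p * w ^ (p - 1) * (G B - G A)) := by
  have hGAB := sub_nonneg_of_monotoneOn hGm.monotoneOn hA hAB hB
  have hν := hM.nonneg
  refine (hM.measure_windowEvent_le hGc hGm hp hA hAB hB hu).trans (ENNReal.ofReal_le_ofReal ?_)
  rw [Real.div_rpow (mul_nonneg hGAB hν) hu.le, Real.mul_rpow hGAB hν, Real.rpow_neg hu.le]
  have := rpow_le_rpow_sub_one_mul hGAB hw (by linarith : 1 ≤ p)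
  calc 2 * 19 ^ 3 * 3 ^ p * ((G B - G A) ^ p * ν ^ p / u ^ p)
      = 2 * 19 ^ 3 * 3 ^ p * (u ^ p)⁻¹ * ν ^ p * (G B - G A) ^ p := by ring
    _ ≤ 2 * 19 ^ 3 * 3 ^ p * (u ^ p)⁻¹ * ν ^ p * (w ^ (p - 1) * (G B - G A)) := by gcongr
    _ = _ := by ring

lemma measure_kappaGt_le (hM : TripleMomentBound P ξ G p ν)
    (hGc : ContinuousOn G (Icc 0 1)) (hGm : StrictMonoOn G (Icc 0 1)) (hp : 2 ≤ p)
    {h : ℝ} (hu : 0 < u) (hh : 0 < h) :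
    P (KappaGt ξ h u) ≤ ENNReal.ofReal (2 * (2 * 19 ^ 3 * 3 ^ p) * u ^ (-p) * ν ^ p *
      (G 1 - G 0) * contModulus G (2 * h) ^ (p - 1)) := by
  have hG := hGm.monotoneOn
  set c := 2 * 19 ^ 3 * 3 ^ p * u ^ (-p) * ν ^ p * contModulus G (2 * h) ^ (p - 1)
  have hc : 0 ≤ c := by
    have := hM.nonneg
    have := contModulus_nonneg hG (by linarith : 0 ≤ 2 * h)
    positivity
  set a : ℕ → ℝ := fun j => min (j * h) 1
  have ha : ∀ j, a j ∈ Icc (0 : ℝ) 1 := fun j =>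
    ⟨le_min (by positivity) zero_le_one, min_le_right _ _⟩
  have hstep : ∀ i, a i ≤ a (i + 2) ∧ a (i + 2) ≤ a i + 2 * h := fun i => by
    simp only [a]; push_cast
    constructor
    · gcongr; linarith
    · rw [← min_add_add_right]; exact min_le_min (by linarith) (by linarith)
  have hmass : ∀ i, G (a (i + 2)) - G (a i) ≤ contModulus G (2 * h) := fun i =>
    (le_abs_self _).trans (abs_sub_le_contModulus hG (ha i) (ha (i + 2))
      (by rw [abs_sub_comm, abs_of_nonneg (by linarith [hstep i])]; linarith [hstep i]))
  calc P (KappaGt ξ h u)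
      ≤ ∑ i ∈ Finset.range (⌊1 / h⌋₊ + 1), P (windowEvent ξ (a i) (a (i + 2)) u) :=
        (measure_mono (kappaGt_subset_iUnion_windowEvent ξ hh u)).trans
          (measure_biUnion_finset_le _ _)
    _ ≤ ∑ i ∈ Finset.range (⌊1 / h⌋₊ + 1), ENNReal.ofReal (c * (G (a (i + 2)) - G (a i))) :=
        Finset.sum_le_sum fun i _ => hM.measure_windowEvent_le_mul hGc hGm hp (ha i).1
          (hstep i).1 (ha (i + 2)).2 hu (hmass i)
    _ = ENNReal.ofReal (c * ∑ i ∈ Finset.range (⌊1 / h⌋₊ + 1), (G (a (i + 2)) - G (a i))) := by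
        rw [Finset.mul_sum, ENNReal.ofReal_sum_of_nonneg fun i _ => mul_nonneg hc
          (sub_nonneg.2 (hG (ha i) (ha (i + 2)) (hstep i).1))]
    _ ≤ ENNReal.ofReal (c * (2 * (G 1 - G 0))) := by
        refine ENNReal.ofReal_le_ofReal (mul_le_mul_of_nonneg_left ?_ hc)
        exact sum_range_sub_two_le (fun j =>
          ⟨hG ⟨le_rfl, zero_le_one⟩ (ha j) (ha j).1, hG (ha j) ⟨zero_le_one, le_rfl⟩ (ha j).2⟩) _
    _ = _ := by simp only [c]; congr 1; ring

end TripleMomentBound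

theorem proposition_4_2_general (b : ℝ≥0∞) (p : ℝ) (hp2 : 2 ≤ p)
    (hpb : ENNReal.ofReal p < b) :
    ∃ K : ℝ, 0 < K ∧
      ∀ (Ω : Type) [MeasurableSpace Ω] (P : Measure Ω), IsProbabilityMeasure P →
      ∀ ξ : ℝ → Ω → ℝ, (∀ t : ℝ, Measurable (ξ t)) →
      (∀ p' : ℝ, 2 ≤ p' → ENNReal.ofReal p' < b → nuFun P ξ p' ≠ ⊤) →
      ∀ G : ℝ → ℝ, ContinuousOn G (Icc 0 1) → StrictMonoOn G (Icc 0 1) → G 0 = 0 →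
      (∀ p' : ℝ, 2 ≤ p' → ENNReal.ofReal p' < b →
        ∀ r s t : ℝ, 0 ≤ r → r ≤ s → s ≤ t → t ≤ 1 →
          tripleMoment P ξ p' r s t ≤ ENNReal.ofReal (G t - G r) * nuFun P ξ p') →
      (∀ u : ℝ, 0 < u → ∀ h : ℝ, 0 < h → h ≤ 1 →
        P (KappaGt ξ h u) ≤
          ENNReal.ofReal (2 * K * u ^ (-p) * (nuFun P ξ p).toReal ^ p *
            (G 1 - G 0) ^ p * contModulus G (2 * h) ^ (p - 1))) ∧
      (∀ ε : ℝ, 0 < ε →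
        Tendsto (fun h : ℝ => P (KappaGt ξ h ε)) (nhdsWithin 0 (Ioi 0)) (nhds 0)) := by
  refine ⟨2 * 19 ^ 3 * 3 ^ p, by positivity, fun Ω _ P _ ξ hξ hnu G hGc hGm _ hmom => ?_⟩
  set ν := (nuFun P ξ p).toReal
  have hM := tripleMomentBound_toReal_nuFun hξ (hnu p hp2 hpb) (hmom p hp2 hpb)
  have hnorm := rpow_mul_le_rpow_mul_rpow_of_le_mul hM.nonneg (by linarith : 1 ≤ p)
    (toReal_nuFun_le_mul hGm.monotoneOn (hnu p hp2 hpb) (hmom p hp2 hpb))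
  have hbound : ∀ u : ℝ, 0 < u → ∀ h : ℝ, 0 < h → h ≤ 1 → P (KappaGt ξ h u) ≤
      ENNReal.ofReal (2 * (2 * 19 ^ 3 * 3 ^ p) * u ^ (-p) * ν ^ p * (G 1 - G 0) ^ p *
        contModulus G (2 * h) ^ (p - 1)) := fun u hu h hh _ => by
    refine (hM.measure_kappaGt_le hGc hGm hp2 hu hh).trans (ENNReal.ofReal_le_ofReal ?_)
    have hw := contModulus_nonneg hGm.monotoneOn (by linarith : 0 ≤ 2 * h)
    calc _ = 2 * (2 * 19 ^ 3 * 3 ^ p) * u ^ (-p) * contModulus G (2 * h) ^ (p - 1) *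
          (ν ^ p * (G 1 - G 0)) := by ring
      _ ≤ 2 * (2 * 19 ^ 3 * 3 ^ p) * u ^ (-p) * contModulus G (2 * h) ^ (p - 1) *
          (ν ^ p * (G 1 - G 0) ^ p) := by gcongr
      _ = _ := by ring
  refine ⟨hbound, fun ε hε => ?_⟩
  have hlim := ENNReal.tendsto_ofReal (((tendsto_contModulus_two_mul hGc hGm.monotoneOn).rpow_const
    (.inr (by linarith : 0 ≤ p - 1))).const_mul
    (2 * (2 * 19 ^ 3 * 3 ^ p) * ε ^ (-p) * ν ^ p * (G 1 - G 0) ^ p))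
  rw [Real.zero_rpow (by linarith), mul_zero, ENNReal.ofReal_zero] at hlim
  refine tendsto_of_tendsto_of_tendsto_of_le_of_le' tendsto_const_nhds hlim
    (.of_forall fun _ => zero_le) ?_
  filter_upwards [Ioc_mem_nhdsGT zero_lt_one] with h hh
  exact hbound ε hε h hh.1 hh.2

/-- Proposition 4.2, estimates (4.10)–(4.12): for every `p ∈ [2,b)` there is a finite constant
`K_p`, depending only on `p`, with
`P(κ[ξ](h) > u) ≤ 2 K_p u^{-p} ν(p)^p (G(1)-G(0))^p (ω[G](2h))^{p-1}` for all `u > 0`,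
`h ∈ (0,1]`; in particular `P(κ[ξ](h) > ε) → 0` as `h → 0⁺`, for every `ε > 0`. -/
theorem proposition_4_2 (b : ℝ≥0∞) (hb : 2 < b) (p : ℝ) (hp2 : 2 ≤ p)
    (hpb : ENNReal.ofReal p < b) :
    ∃ K : ℝ, 0 < K ∧
      ∀ (Ω : Type) [MeasurableSpace Ω] (P : Measure Ω), IsProbabilityMeasure P →
      ∀ ξ : ℝ → Ω → ℝ, (∀ t : ℝ, Measurable (ξ t)) →
      (∀ p' : ℝ, 2 ≤ p' → ENNReal.ofReal p' < b → nuFun P ξ p' ≠ ⊤) →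
      ∀ G : ℝ → ℝ, ContinuousOn G (Icc 0 1) → StrictMonoOn G (Icc 0 1) → G 0 = 0 →
      (∀ p' : ℝ, 2 ≤ p' → ENNReal.ofReal p' < b →
        ∀ r s t : ℝ, 0 ≤ r → r ≤ s → s ≤ t → t ≤ 1 →
          tripleMoment P ξ p' r s t ≤ ENNReal.ofReal (G t - G r) * nuFun P ξ p') →
      (∀ u : ℝ, 0 < u → ∀ h : ℝ, 0 < h → h ≤ 1 →
        P (KappaGt ξ h u) ≤
          ENNReal.ofReal (2 * K * u ^ (-p) * (nuFun P ξ p).toReal ^ p *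
            (G 1 - G 0) ^ p * contModulus G (2 * h) ^ (p - 1))) ∧
      (∀ ε : ℝ, 0 < ε →
        Tendsto (fun h : ℝ => P (KappaGt ξ h ε)) (nhdsWithin 0 (Ioi 0)) (nhds 0)) :=
  proposition_4_2_general b p hp2 hpb
end
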